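/- arXiv:1005.1729 — 6 statements merged into one kernel-verified Lean document; each statement's English description precedes it below -/
import Mathlib

section
/- Let u be a classical solution of the parabolic problem on the time interval (0,T), with ∂_t u and ∂_y∂_t u continuous on [−R,R]×(0,T). Then the function t↦ℰ(u(·,t)) is differentiable on (0,T) and (d/dt)ℰ(u(·,t))=−∫_{−R}^{R}|∂_t u(y,t)|² dy for all t∈(0,T); in particular t↦ℰ(u(·,t)) is non-increasing. -/
open Set MeasureTheory Filter
open Topology

noncomputable def f (lam a u : ℝ) : ℝ := lam * u * (u - a) * (1 - u)

noncomputable def F (lam a u : ℝ) : ℝ := ∫ v in (0:ℝ)..u, f lam a v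

/-- Derivative within the interval `[-R, R]`. -/
noncomputable def pd (R : ℝ) (w : ℝ → ℝ) : ℝ → ℝ := derivWithin w (Set.Icc (-R) R)

/-- A profile for the thickness `R`: a C² function on `[-R,R]` satisfying
`V'' + f(V) = 0` on `(-R,R)` with the Robin boundary conditions
`V'(-R) = √α V(-R)` and `V'(R) = -√α V(R)`. -/
def IsProfile (lam a α R : ℝ) (V : ℝ → ℝ) : Prop :=
  ContDiffOn ℝ 2 V (Set.Icc (-R) R) ∧
  (∀ y ∈ Set.Ioo (-R) R, pd R (pd R V) y + f lam a (V y) = 0) ∧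
  pd R V (-R) = Real.sqrt α * V (-R) ∧
  pd R V R = -Real.sqrt α * V R

/-- A profile is non-trivial if it is not identically zero on `[-R,R]`. -/
def IsNontrivial (R : ℝ) (V : ℝ → ℝ) : Prop :=
  ∃ y ∈ Set.Icc (-R) R, V y ≠ 0

/-- A classical solution of the parabolic problem
`∂ₜ u = ∂²_yy u + f(u)` on `(-R,R) × int I`, with Robin boundary conditions,
continuous on `[-R,R] × I` and C¹ in `y` up to the boundary for each interior time. -/
def IsClassicalSolution (lam a α R : ℝ) (I : Set ℝ) (u : ℝ → ℝ → ℝ) : Prop :=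
  ContinuousOn (fun p : ℝ × ℝ => u p.1 p.2) (Set.Icc (-R) R ×ˢ I) ∧
  (∀ t ∈ interior I, ContDiffOn ℝ 1 (fun y => u y t) (Set.Icc (-R) R)) ∧
  (∀ t ∈ interior I, ∀ y ∈ Set.Ioo (-R) R, DifferentiableAt ℝ (u y) t) ∧
  (∀ t ∈ interior I, ∀ y ∈ Set.Ioo (-R) R,
    DifferentiableWithinAt ℝ (pd R (fun z => u z t)) (Set.Icc (-R) R) y) ∧
  ContinuousOn (fun p : ℝ × ℝ => deriv (u p.1) p.2) (Set.Ioo (-R) R ×ˢ interior I) ∧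
  ContinuousOn (fun p : ℝ × ℝ => pd R (fun z => u z p.2) p.1)
    (Set.Ioo (-R) R ×ˢ interior I) ∧
  ContinuousOn (fun p : ℝ × ℝ => pd R (pd R (fun z => u z p.2)) p.1)
    (Set.Ioo (-R) R ×ˢ interior I) ∧
  (∀ t ∈ interior I, ∀ y ∈ Set.Ioo (-R) R,
    deriv (u y) t = pd R (pd R (fun z => u z t)) y + f lam a (u y t)) ∧
  (∀ t ∈ interior I,
    pd R (fun z => u z t) (-R) = Real.sqrt α * u (-R) t ∧
    pd R (fun z => u z t) R = -Real.sqrt α * u R t)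

/-- The energy of a function `w` on `[-R,R]`. -/
noncomputable def energy (lam a α R : ℝ) (w : ℝ → ℝ) : ℝ :=
  (1/2) * (∫ y in (-R)..R, (pd R w y)^2)
    - (∫ y in (-R)..R, F lam a (w y))
    + (Real.sqrt α / 2) * ((w R)^2 + (w (-R))^2)

lemma f_cont (lam a : ℝ) : Continuous (f lam a) := by unfold f; continuity

lemma F_hasDerivAt (lam a x : ℝ) : HasDerivAt (F lam a) (f lam a x) x :=
  intervalIntegral.integral_hasDerivAt_right
    ((f_cont lam a).intervalIntegrable _ _)
    ((f_cont lam a).stronglyMeasurableAtFilter _ _) (f_cont lam a).continuousAt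

lemma F_cont (lam a : ℝ) : Continuous (F lam a) :=
  continuous_iff_continuousAt.2 fun x => (F_hasDerivAt lam a x).continuousAt

section key
variable (lam a α R T : ℝ) (u : ℝ → ℝ → ℝ)

/-- continuity in y of q(·,σ) := deriv (u ·) σ on Icc, from hct. -/
lemma q_contOn (hR : 0 < R)
    (hct : ContinuousOn (fun p : ℝ × ℝ => deriv (u p.1) p.2)
      (Set.Icc (-R) R ×ˢ Set.Ioo 0 T))
    {σ : ℝ} (hσ : σ ∈ Set.Ioo (0:ℝ) T) :
    ContinuousOn (fun y => deriv (u y) σ) (Set.Icc (-R) R) := by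
  have : ContinuousOn (fun y : ℝ => ((y, σ) : ℝ × ℝ)) (Set.Icc (-R) R) :=
    (continuous_id.prodMk continuous_const).continuousOn
  exact hct.comp this (fun y hy => Set.mk_mem_prod hy hσ)

lemma key_identity (hR : 0 < R)
    (hu : IsClassicalSolution lam a α R (Set.Ioo 0 T) u)
    (hct : ContinuousOn (fun p : ℝ × ℝ => deriv (u p.1) p.2)
      (Set.Icc (-R) R ×ˢ Set.Ioo 0 T))
    {s t : ℝ} (hs : s ∈ Set.Ioo (0:ℝ) T) (ht : t ∈ Set.Ioo (0:ℝ) T) :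
    energy lam a α R (fun y => u y s) - energy lam a α R (fun y => u y t)
      = ∫ y in (-R)..R,
          (-(1/2) * ((u y s - u y t) *
            (deriv (u y) s + deriv (u y) t - f lam a (u y s) - f lam a (u y t)))
           - (F lam a (u y s) - F lam a (u y t))) := by
  obtain ⟨hcont, hC1, hdt, hdyy, -, -, -, hpde, hbc⟩ := hu
  rw [interior_Ioo] at hC1 hdt hdyy hpde hbc
  have hRR : -R ≤ R := by linarith
  have hRR' : -R < R := by linarith
  have huIcc : Set.uIcc (-R) R = Set.Icc (-R) R := Set.uIcc_of_le hRR
  have hUD : UniqueDiffOn ℝ (Set.Icc (-R) R) := uniqueDiffOn_Icc hRR'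
  -- abbreviations
  set ws : ℝ → ℝ := fun y => u y s with hws
  set wt : ℝ → ℝ := fun y => u y t with hwt
  -- continuity facts
  have hwsC : ContinuousOn ws (Set.Icc (-R) R) := (hC1 s hs).continuousOn
  have hwtC : ContinuousOn wt (Set.Icc (-R) R) := (hC1 t ht).continuousOn
  have hpsC : ContinuousOn (pd R ws) (Set.Icc (-R) R) :=
    (hC1 s hs).continuousOn_derivWithin hUD le_rfl
  have hptC : ContinuousOn (pd R wt) (Set.Icc (-R) R) :=
    (hC1 t ht).continuousOn_derivWithin hUD le_rfl
  have hqsC : ContinuousOn (fun y => deriv (u y) s) (Set.Icc (-R) R) :=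
    q_contOn R T u hR hct hs
  have hqtC : ContinuousOn (fun y => deriv (u y) t) (Set.Icc (-R) R) :=
    q_contOn R T u hR hct ht
  -- D: the bulk integrand
  set D : ℝ → ℝ := fun y => (ws y - wt y) *
      (deriv (u y) s + deriv (u y) t - f lam a (ws y) - f lam a (wt y)) with hD
  have hDC : ContinuousOn D (Set.Icc (-R) R) := by
    apply ContinuousOn.mul (hwsC.sub hwtC)
    exact (((hqsC.add hqtC).sub ((f_cont lam a).comp_continuousOn hwsC)).sub
      ((f_cont lam a).comp_continuousOn hwtC))
  -- Φ: boundary function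
  set Φ : ℝ → ℝ := fun y => (ws y - wt y) * (pd R ws y + pd R wt y) with hΦ
  have hΦC : ContinuousOn Φ (Set.Icc (-R) R) := (hwsC.sub hwtC).mul (hpsC.add hptC)
  -- derivative of Φ at interior points
  have hΦderiv : ∀ y ∈ Set.Ioo (-R) R,
      HasDerivAt Φ (((pd R ws y)^2 - (pd R wt y)^2) + D y) y := by
    intro y hy
    have hmem : Set.Icc (-R) R ∈ nhds y := Icc_mem_nhds hy.1 hy.2
    have hws' : HasDerivAt ws (pd R ws y) y := by
      have := ((hC1 s hs).differentiableOn one_ne_zero y (Set.mem_Icc_of_Ioo hy)).differentiableAt hmem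
      simpa [pd, derivWithin_of_mem_nhds hmem] using this.hasDerivAt
    have hwt' : HasDerivAt wt (pd R wt y) y := by
      have := ((hC1 t ht).differentiableOn one_ne_zero y (Set.mem_Icc_of_Ioo hy)).differentiableAt hmem
      simpa [pd, derivWithin_of_mem_nhds hmem] using this.hasDerivAt
    have hps' : HasDerivAt (pd R ws) (deriv (u y) s - f lam a (ws y)) y := by
      have h1 := (hdyy s hs y hy).differentiableAt hmem
      have h2 : deriv (pd R ws) y = pd R (pd R ws) y :=
        (derivWithin_of_mem_nhds hmem).symm
      have h3 : pd R (pd R ws) y = deriv (u y) s - f lam a (ws y) := by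
        have := hpde s hs y hy; linarith
      have := h1.hasDerivAt
      rw [h2, h3] at this; exact this
    have hpt' : HasDerivAt (pd R wt) (deriv (u y) t - f lam a (wt y)) y := by
      have h1 := (hdyy t ht y hy).differentiableAt hmem
      have h2 : deriv (pd R wt) y = pd R (pd R wt) y :=
        (derivWithin_of_mem_nhds hmem).symm
      have h3 : pd R (pd R wt) y = deriv (u y) t - f lam a (wt y) := by
        have := hpde t ht y hy; linarith
      have := h1.hasDerivAt
      rw [h2, h3] at this; exact this
    have := (hws'.sub hwt').mul (hps'.add hpt')
    refine this.congr_deriv ?_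
    simp only [hD, Pi.add_apply, Pi.sub_apply]
    ring
  -- FTC
  set Φ' : ℝ → ℝ := fun y => ((pd R ws y)^2 - (pd R wt y)^2) + D y with hΦ'
  have hΦ'C : ContinuousOn Φ' (Set.Icc (-R) R) :=
    ((hpsC.pow 2).sub (hptC.pow 2)).add hDC
  have hII : ∀ g : ℝ → ℝ, ContinuousOn g (Set.Icc (-R) R) →
      IntervalIntegrable g volume (-R) R := fun g hg =>
    ContinuousOn.intervalIntegrable (by rwa [huIcc])
  have hFTC : ∫ y in (-R)..R, Φ' y = Φ R - Φ (-R) :=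
    intervalIntegral.integral_eq_sub_of_hasDerivAt_of_le hRR hΦC hΦderiv
      (hII _ hΦ'C)
  -- split integrals
  have hint1 : IntervalIntegrable (fun y => (pd R ws y)^2) volume (-R) R :=
    hII _ (hpsC.pow 2)
  have hint2 : IntervalIntegrable (fun y => (pd R wt y)^2) volume (-R) R :=
    hII _ (hptC.pow 2)
  have hintD : IntervalIntegrable D volume (-R) R := hII _ hDC
  have hintFs : IntervalIntegrable (fun y => F lam a (ws y)) volume (-R) R :=
    hII _ ((F_cont lam a).comp_continuousOn hwsC)
  have hintFt : IntervalIntegrable (fun y => F lam a (wt y)) volume (-R) R :=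
    hII _ ((F_cont lam a).comp_continuousOn hwtC)
  have hsplit : ∫ y in (-R)..R, Φ' y
      = ((∫ y in (-R)..R, (pd R ws y)^2) - ∫ y in (-R)..R, (pd R wt y)^2)
        + ∫ y in (-R)..R, D y := by
    rw [hΦ']
    rw [intervalIntegral.integral_add (hint1.sub hint2) hintD,
      intervalIntegral.integral_sub hint1 hint2]
  -- boundary values
  have hbcs := hbc s hs
  have hbct := hbc t ht
  have hΦR : Φ R = -Real.sqrt α * ((ws R)^2 - (wt R)^2) := by
    simp only [hΦ, hws, hwt]
    rw [hbcs.2, hbct.2]; ring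
  have hΦmR : Φ (-R) = Real.sqrt α * ((ws (-R))^2 - (wt (-R))^2) := by
    simp only [hΦ, hws, hwt]
    rw [hbcs.1, hbct.1]; ring
  -- RHS split
  have hRHS : (∫ y in (-R)..R,
        (-(1/2) * ((u y s - u y t) *
          (deriv (u y) s + deriv (u y) t - f lam a (u y s) - f lam a (u y t)))
         - (F lam a (u y s) - F lam a (u y t))))
      = -(1/2) * (∫ y in (-R)..R, D y)
        - ((∫ y in (-R)..R, F lam a (ws y)) - ∫ y in (-R)..R, F lam a (wt y)) := by
    rw [intervalIntegral.integral_sub ((hintD.const_mul _)) (hintFs.sub hintFt),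
      intervalIntegral.integral_const_mul,
      intervalIntegral.integral_sub hintFs hintFt]
  rw [hRHS]
  have h1 : (∫ y in (-R)..R, (pd R ws y)^2) - (∫ y in (-R)..R, (pd R wt y)^2)
      = (Φ R - Φ (-R)) - ∫ y in (-R)..R, D y := by
    rw [← hFTC, hsplit]; ring
  simp only [energy]
  rw [hΦR, hΦmR] at h1
  have := h1
  nlinarith [this]
end key

/-- The energy is a strict Lyapunov functional -/
theorem energy_is_lyapunov (lam a α R T : ℝ)
    (hlam : 0 < lam) (ha0 : 0 < a) (ha1 : a < 1/2) (hα : 0 < α)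
    (hR : 0 < R) (hT : 0 < T)
    (u : ℝ → ℝ → ℝ)
    (hu : IsClassicalSolution lam a α R (Set.Ioo 0 T) u)
    (hct : ContinuousOn (fun p : ℝ × ℝ => deriv (u p.1) p.2)
      (Set.Icc (-R) R ×ˢ Set.Ioo 0 T))
    (hcyt : ContinuousOn (fun p : ℝ × ℝ => pd R (fun z => deriv (u z) p.2) p.1)
      (Set.Icc (-R) R ×ˢ Set.Ioo 0 T)) :
    (∀ t ∈ Set.Ioo (0:ℝ) T,
      HasDerivAt (fun s => energy lam a α R (fun y => u y s))
        (-(∫ y in (-R)..R, (deriv (u y) t)^2)) t) ∧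
    AntitoneOn (fun s => energy lam a α R (fun y => u y s)) (Set.Ioo 0 T) := by
  have hRR : -R ≤ R := by linarith
  have hcontu : ContinuousOn (fun p : ℝ × ℝ => u p.1 p.2)
      (Set.Icc (-R) R ×ˢ Set.Ioo 0 T) := hu.1
  have hdt : ∀ t ∈ Set.Ioo (0:ℝ) T, ∀ y ∈ Set.Ioo (-R) R,
      DifferentiableAt ℝ (u y) t := by
    have := hu.2.2.1; rwa [interior_Ioo] at this
  -- the main derivative statement
  have hder : ∀ t ∈ Set.Ioo (0:ℝ) T,
      HasDerivAt (fun s => energy lam a α R (fun y => u y s))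
        (-(∫ y in (-R)..R, (deriv (u y) t)^2)) t := by
    intro t ht
    set μ : Measure ℝ := volume.restrict (Set.Ioc (-R) R) with hμ
    have haeIoo : ∀ᵐ y ∂μ, y ∈ Set.Ioo (-R) R := by
      rw [hμ, Measure.restrict_congr_set Ioo_ae_eq_Ioc.symm]
      exact ae_restrict_mem measurableSet_Ioo
    set G : ℝ → ℝ → ℝ := fun s y => (s - t)⁻¹ *
      (-(1/2) * ((u y s - u y t) *
        (deriv (u y) s + deriv (u y) t - f lam a (u y s) - f lam a (u y t)))
       - (F lam a (u y s) - F lam a (u y t))) with hG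
    -- δ and the compact time interval J
    set δ : ℝ := min t (T - t) / 2 with hδ
    have hδpos : 0 < δ := by
      have h1 : 0 < t := ht.1
      have h2 : 0 < T - t := by linarith [ht.2]
      have := lt_min h1 h2
      positivity
    set J : Set ℝ := Set.Icc (t - δ) (t + δ) with hJ
    have hJsub : J ⊆ Set.Ioo 0 T := by
      intro σ hσ
      have h1 : δ ≤ t / 2 := by
        rw [hδ]; have := min_le_left t (T - t); linarith
      have h2 : δ ≤ (T - t) / 2 := by
        rw [hδ]; have := min_le_right t (T - t); linarith
      obtain ⟨hσ1, hσ2⟩ := hσ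
      constructor <;> [linarith [ht.1]; linarith [ht.2]]
    have htJ : t ∈ J := by
      constructor <;> simp <;> linarith
    set K : Set (ℝ × ℝ) := Set.Icc (-R) R ×ˢ J with hK
    have hKcomp : IsCompact K := isCompact_Icc.prod isCompact_Icc
    have hKsub : K ⊆ Set.Icc (-R) R ×ˢ Set.Ioo 0 T :=
      Set.prod_mono_right hJsub
    obtain ⟨M₁', hM₁'⟩ := hKcomp.exists_bound_of_continuousOn (hct.mono hKsub)
    obtain ⟨M₂', hM₂'⟩ := hKcomp.exists_bound_of_continuousOn
      (((f_cont lam a).comp_continuousOn (hcontu.mono hKsub)))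
    set M₁ : ℝ := max M₁' 0 with hM₁def
    set M₂ : ℝ := max M₂' 0 with hM₂def
    have hM₁ : ∀ y ∈ Set.Icc (-R) R, ∀ σ ∈ J, |deriv (u y) σ| ≤ M₁ := fun y hy σ hσ =>
      le_trans (hM₁' (y, σ) ⟨hy, hσ⟩) (le_max_left _ _)
    have hM₂ : ∀ y ∈ Set.Icc (-R) R, ∀ σ ∈ J, |f lam a (u y σ)| ≤ M₂ := fun y hy σ hσ =>
      le_trans (hM₂' (y, σ) ⟨hy, hσ⟩) (le_max_left _ _)
    have hM₁0 : 0 ≤ M₁ := le_max_right _ _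
    have hM₂0 : 0 ≤ M₂ := le_max_right _ _
    set C : ℝ := M₁ * (M₁ + M₂) + M₁ * M₂ with hC
    -- key pointwise estimates via MVT
    have hMVT : ∀ y ∈ Set.Ioo (-R) R, ∀ s ∈ J,
        |u y s - u y t| ≤ M₁ * |s - t| ∧
        |F lam a (u y s) - F lam a (u y t)| ≤ M₂ * M₁ * |s - t| := by
      intro y hy s hsJ
      have hyIcc : y ∈ Set.Icc (-R) R := Set.mem_Icc_of_Ioo hy
      have hd1 : ∀ σ ∈ J, HasDerivWithinAt (u y) (deriv (u y) σ) J σ :=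
        fun σ hσ => ((hdt σ (hJsub hσ) y hy).hasDerivAt).hasDerivWithinAt
      constructor
      · have := (convex_Icc (t - δ) (t + δ)).norm_image_sub_le_of_norm_hasDerivWithin_le
          hd1 (fun σ hσ => hM₁ y hyIcc σ hσ) htJ hsJ
        simpa [Real.norm_eq_abs] using this
      · have hd2 : ∀ σ ∈ J, HasDerivWithinAt (fun σ => F lam a (u y σ))
            (f lam a (u y σ) * deriv (u y) σ) J σ := fun σ hσ =>
          (((F_hasDerivAt lam a (u y σ)).comp σ
            (hdt σ (hJsub hσ) y hy).hasDerivAt)).hasDerivWithinAt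
        have hb2 : ∀ σ ∈ J, ‖f lam a (u y σ) * deriv (u y) σ‖ ≤ M₂ * M₁ := by
          intro σ hσ
          rw [Real.norm_eq_abs, abs_mul]
          exact mul_le_mul (hM₂ y hyIcc σ hσ) (hM₁ y hyIcc σ hσ) (abs_nonneg _) hM₂0
        have := (convex_Icc (t - δ) (t + δ)).norm_image_sub_le_of_norm_hasDerivWithin_le
          hd2 hb2 htJ hsJ
        simpa [Real.norm_eq_abs] using this
    -- dominated convergence
    have hmain : Tendsto (fun s => ∫ y, G s y ∂μ) (𝓝[≠] t)
        (𝓝 (∫ y, -(deriv (u y) t)^2 ∂μ)) := by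
      apply tendsto_integral_filter_of_dominated_convergence (fun _ => C)
      · -- measurability
        have hev : ∀ᶠ s in 𝓝[≠] t, s ∈ Set.Ioo (0:ℝ) T :=
          (isOpen_Ioo.eventually_mem ht).filter_mono nhdsWithin_le_nhds
        filter_upwards [hev] with s hs
        have h1 : ContinuousOn (G s) (Set.Icc (-R) R) := by
          apply ContinuousOn.mul continuousOn_const
          have hus : ContinuousOn (fun y => u y s) (Set.Icc (-R) R) := by
            have : ContinuousOn (fun y : ℝ => ((y, s) : ℝ × ℝ)) (Set.Icc (-R) R) :=
              (continuous_id.prodMk continuous_const).continuousOn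
            exact hcontu.comp this (fun y hy => Set.mk_mem_prod hy hs)
          have hut : ContinuousOn (fun y => u y t) (Set.Icc (-R) R) := by
            have : ContinuousOn (fun y : ℝ => ((y, t) : ℝ × ℝ)) (Set.Icc (-R) R) :=
              (continuous_id.prodMk continuous_const).continuousOn
            exact hcontu.comp this (fun y hy => Set.mk_mem_prod hy ht)
          have hqs : ContinuousOn (fun y => deriv (u y) s) (Set.Icc (-R) R) :=
            q_contOn R T u hR hct hs
          have hqt : ContinuousOn (fun y => deriv (u y) t) (Set.Icc (-R) R) :=
            q_contOn R T u hR hct ht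
          exact (((continuousOn_const.mul ((hus.sub hut).mul
            (((hqs.add hqt).sub ((f_cont lam a).comp_continuousOn hus)).sub
              ((f_cont lam a).comp_continuousOn hut))))).sub
            (((F_cont lam a).comp_continuousOn hus).sub
              ((F_cont lam a).comp_continuousOn hut)))
        exact (h1.mono Set.Ioc_subset_Icc_self).aestronglyMeasurable measurableSet_Ioc
      · -- bound
        have hev1 : ∀ᶠ s in 𝓝[≠] t, s ∈ J := by
          have : J ∈ 𝓝 t := Icc_mem_nhds (by linarith) (by linarith)
          exact nhdsWithin_le_nhds this
        have hev2 : ∀ᶠ s in 𝓝[≠] t, s ≠ t := by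
          have : ∀ᶠ s in 𝓝[≠] t, s ∈ ({t}ᶜ : Set ℝ) := eventually_mem_nhdsWithin
          simpa using this
        filter_upwards [hev1, hev2] with s hsJ hsne
        filter_upwards [haeIoo] with y hy
        have hyIcc : y ∈ Set.Icc (-R) R := Set.mem_Icc_of_Ioo hy
        obtain ⟨hA, hF⟩ := hMVT y hy s hsJ
        have hB : |deriv (u y) s + deriv (u y) t - f lam a (u y s) - f lam a (u y t)|
            ≤ 2 * M₁ + 2 * M₂ := by
          have h1 := hM₁ y hyIcc s hsJ
          have h2 := hM₁ y hyIcc t htJ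
          have h3 := hM₂ y hyIcc s hsJ
          have h4 := hM₂ y hyIcc t htJ
          obtain ⟨h1a, h1b⟩ := abs_le.1 h1
          obtain ⟨h2a, h2b⟩ := abs_le.1 h2
          obtain ⟨h3a, h3b⟩ := abs_le.1 h3
          obtain ⟨h4a, h4b⟩ := abs_le.1 h4
          exact abs_le.2 ⟨by linarith, by linarith⟩
        have hst : (0:ℝ) < |s - t| := abs_pos.2 (sub_ne_zero.2 hsne)
        have hX : |(-(1/2) * ((u y s - u y t) *
              (deriv (u y) s + deriv (u y) t - f lam a (u y s) - f lam a (u y t)))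
             - (F lam a (u y s) - F lam a (u y t)))| ≤ C * |s - t| := by
          have h1 : |(-(1/2) : ℝ) * ((u y s - u y t) *
              (deriv (u y) s + deriv (u y) t - f lam a (u y s) - f lam a (u y t)))|
              ≤ (1/2) * (M₁ * |s - t|) * (2 * M₁ + 2 * M₂) := by
            rw [abs_mul, abs_mul]
            have : |(-(1/2) : ℝ)| = 1/2 := by norm_num
            rw [this]
            have := mul_le_mul hA hB (abs_nonneg _) (by positivity)
            nlinarith [abs_nonneg (u y s - u y t)]
          calc _ ≤ |(-(1/2) : ℝ) * ((u y s - u y t) *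
              (deriv (u y) s + deriv (u y) t - f lam a (u y s) - f lam a (u y t)))|
              + |F lam a (u y s) - F lam a (u y t)| := abs_sub _ _
            _ ≤ (1/2) * (M₁ * |s - t|) * (2 * M₁ + 2 * M₂) + M₂ * M₁ * |s - t| := by
                linarith
            _ = C * |s - t| := by rw [hC]; ring
        rw [hG]
        simp only [Real.norm_eq_abs, abs_mul, abs_inv]
        rw [inv_mul_le_iff₀ hst]
        calc _ ≤ C * |s - t| := hX
          _ = |s - t| * C := by ring
      · -- bound integrable
        rw [hμ]
        exact (integrableOn_const measure_Ioc_lt_top.ne)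
      · -- pointwise limit
        filter_upwards [haeIoo] with y hy
        have hyIcc : y ∈ Set.Icc (-R) R := Set.mem_Icc_of_Ioo hy
        have hq : HasDerivAt (u y) (deriv (u y) t) t := (hdt t ht y hy).hasDerivAt
        have hslope1 : Tendsto (slope (u y) t) (𝓝[≠] t) (𝓝 (deriv (u y) t)) :=
          hasDerivAt_iff_tendsto_slope.1 hq
        have hFq : HasDerivAt (fun σ => F lam a (u y σ))
            (f lam a (u y t) * deriv (u y) t) t :=
          (F_hasDerivAt lam a (u y t)).comp t hq
        have hslope2 : Tendsto (slope (fun σ => F lam a (u y σ)) t) (𝓝[≠] t)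
            (𝓝 (f lam a (u y t) * deriv (u y) t)) :=
          hasDerivAt_iff_tendsto_slope.1 hFq
        have hqc : Tendsto (fun s => deriv (u y) s) (𝓝[≠] t) (𝓝 (deriv (u y) t)) := by
          have hnhds : Set.Icc (-R) R ×ˢ Set.Ioo 0 T ∈ 𝓝 ((y, t) : ℝ × ℝ) :=
            prod_mem_nhds (Icc_mem_nhds hy.1 hy.2) (isOpen_Ioo.mem_nhds ht)
          have := (hct.continuousAt hnhds).comp
            ((continuous_const.prodMk continuous_id).continuousAt (x := t))
          exact this.tendsto.mono_left nhdsWithin_le_nhds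
        have huc : Tendsto (fun s => u y s) (𝓝[≠] t) (𝓝 (u y t)) :=
          (hq.continuousAt.tendsto).mono_left nhdsWithin_le_nhds
        have hfc : Tendsto (fun s => f lam a (u y s)) (𝓝[≠] t) (𝓝 (f lam a (u y t))) :=
          ((f_cont lam a).continuousAt.tendsto.comp huc)
        have hGeq : ∀ s, s ≠ t → G s y =
            -(1/2) * (slope (u y) t s *
              (deriv (u y) s + deriv (u y) t - f lam a (u y s) - f lam a (u y t)))
            - slope (fun σ => F lam a (u y σ)) t s := by
          intro s hs
          rw [hG]
          simp only [slope_def_field, div_eq_inv_mul]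
          ring
        have hlim : Tendsto (fun s =>
            -(1/2) * (slope (u y) t s *
              (deriv (u y) s + deriv (u y) t - f lam a (u y s) - f lam a (u y t)))
            - slope (fun σ => F lam a (u y σ)) t s) (𝓝[≠] t)
            (𝓝 (-(1/2) * (deriv (u y) t *
              (deriv (u y) t + deriv (u y) t - f lam a (u y t) - f lam a (u y t)))
            - f lam a (u y t) * deriv (u y) t)) := by
          exact ((tendsto_const_nhds.mul (hslope1.mul
            (((hqc.add tendsto_const_nhds).sub hfc).sub tendsto_const_nhds))).sub hslope2)
        have : Tendsto (fun s => G s y) (𝓝[≠] t)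
            (𝓝 (-(1/2) * (deriv (u y) t *
              (deriv (u y) t + deriv (u y) t - f lam a (u y t) - f lam a (u y t)))
            - f lam a (u y t) * deriv (u y) t)) := by
          apply hlim.congr'
          filter_upwards [eventually_mem_nhdsWithin] with s hs
          exact (hGeq s hs).symm
        convert this using 2
        ring
    -- convert to slope statement
    rw [hasDerivAt_iff_tendsto_slope]
    have hint : ∫ y, -(deriv (u y) t)^2 ∂μ = -(∫ y in (-R)..R, (deriv (u y) t)^2) := by
      rw [intervalIntegral.integral_of_le hRR, ← integral_neg]
    rw [← hint]
    apply hmain.congr'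
    have hev : ∀ᶠ s in 𝓝[≠] t, s ∈ Set.Ioo (0:ℝ) T :=
      (isOpen_Ioo.eventually_mem ht).filter_mono nhdsWithin_le_nhds
    have hev2 : ∀ᶠ s in 𝓝[≠] t, s ≠ t := by
      have : ∀ᶠ s in 𝓝[≠] t, s ∈ ({t}ᶜ : Set ℝ) := eventually_mem_nhdsWithin
      simpa using this
    filter_upwards [hev, hev2] with s hs hsne
    have hkey := key_identity lam a α R T u hR hu hct hs ht
    rw [slope_def_field, div_eq_inv_mul, hkey, intervalIntegral.integral_of_le hRR,
      ← MeasureTheory.integral_const_mul]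
  refine ⟨hder, ?_⟩
  apply antitoneOn_of_deriv_nonpos (convex_Ioo 0 T)
  · exact fun s hs => ((hder s hs).continuousAt).continuousWithinAt
  · intro s hs
    rw [interior_Ioo] at hs
    exact ((hder s hs).differentiableAt).differentiableWithinAt
  · intro s hs
    rw [interior_Ioo] at hs
    rw [(hder s hs).deriv]
    have h0 : 0 ≤ ∫ y in (-R)..R, (deriv (u y) s)^2 :=
      intervalIntegral.integral_nonneg hRR (fun y _ => sq_nonneg _)
    linarith
end

section
/- Let V be a profile and μ≥0. Then μ is a nonnegative eigenvalue of the linearization at V if and only if h(μ)∈π·ℤ, i.e. there exists k∈ℤ with θ_μ(R)+arctan(√(μ+α))=kπ. -/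
open Set MeasureTheory Filter

/-- `μ` is a (nonnegative) eigenvalue of the linearization at the profile `V`:
there is a nonzero C² function `φ` with `φ'' + f'(V)φ = μφ` on `(-R,R)`,
`φ'(-R) = √(μ+α) φ(-R)` and `φ'(R) = -√(μ+α) φ(R)`. -/
def IsEigenvalue (lam a α R : ℝ) (V : ℝ → ℝ) (μ : ℝ) : Prop :=
  ∃ φ : ℝ → ℝ, ContDiffOn ℝ 2 φ (Set.Icc (-R) R) ∧
    (∃ y ∈ Set.Icc (-R) R, φ y ≠ 0) ∧
    (∀ y ∈ Set.Ioo (-R) R,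
      pd R (pd R φ) y + deriv (f lam a) (V y) * φ y = μ * φ y) ∧
    pd R φ (-R) = Real.sqrt (μ + α) * φ (-R) ∧
    pd R φ R = -Real.sqrt (μ + α) * φ R

/-- A profile is stable if its linearization has no nonnegative eigenvalue. -/
def IsStable (lam a α R : ℝ) (V : ℝ → ℝ) : Prop :=
  ¬ ∃ μ : ℝ, 0 ≤ μ ∧ IsEigenvalue lam a α R V μ

/-- The Prüfer angle `θ_μ` associated to a profile `V` and `μ ≥ 0`:
the solution on `[-R,R]` of
`θ' = -sin² θ + (μ - f'(V(y))) cos² θ`, `θ(-R) = arctan √(μ+α)`. -/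
def IsTheta (lam a α R μ : ℝ) (V θ : ℝ → ℝ) : Prop :=
  θ (-R) = Real.arctan (Real.sqrt (μ + α)) ∧
  ∀ y ∈ Set.Icc (-R) R,
    HasDerivWithinAt θ
      (-(Real.sin (θ y))^2 + (μ - deriv (f lam a) (V y)) * (Real.cos (θ y))^2)
      (Set.Icc (-R) R) y

/-- Auxiliary: a function with two orders of `HasDerivWithinAt` data on `[-R,R]`,
the second derivative being continuous, is C² there. -/
lemma contDiffOn_two_of_derivs {R : ℝ} (hR : 0 < R) (ψ ψ1 E : ℝ → ℝ)
    (h1 : ∀ y ∈ Set.Icc (-R) R, HasDerivWithinAt ψ (ψ1 y) (Set.Icc (-R) R) y)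
    (h2 : ∀ y ∈ Set.Icc (-R) R, HasDerivWithinAt ψ1 (E y) (Set.Icc (-R) R) y)
    (hE : ContinuousOn E (Set.Icc (-R) R)) :
    ContDiffOn ℝ 2 ψ (Set.Icc (-R) R) := by
  have hu : UniqueDiffOn ℝ (Set.Icc (-R) R) := uniqueDiffOn_Icc (by linarith)
  have e1 : EqOn (derivWithin ψ (Set.Icc (-R) R)) ψ1 (Set.Icc (-R) R) :=
    fun y hy => (h1 y hy).derivWithin (hu y hy)
  have e2 : EqOn (derivWithin ψ1 (Set.Icc (-R) R)) E (Set.Icc (-R) R) :=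
    fun y hy => (h2 y hy).derivWithin (hu y hy)
  have c1 : ContDiffOn ℝ 1 ψ1 (Set.Icc (-R) R) := by
    rw [show (1 : WithTop ℕ∞) = 0 + 1 by norm_num, contDiffOn_succ_iff_derivWithin hu]
    refine ⟨fun y hy => (h2 y hy).differentiableWithinAt, by simp, ?_⟩
    rw [contDiffOn_zero]
    exact hE.congr e2
  rw [show (2 : WithTop ℕ∞) = 1 + 1 by norm_num, contDiffOn_succ_iff_derivWithin hu]
  exact ⟨fun y hy => (h1 y hy).differentiableWithinAt, by simp, c1.congr e1⟩

/-- Auxiliary: uniqueness for the linear second-order ODE `u'' = Q u` on `[-R,R]`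
with matching initial data at `-R`. -/
lemma second_order_unique {R : ℝ} (hR : 0 < R) (Q : ℝ → ℝ)
    (hQ : ContinuousOn Q (Set.Icc (-R) R)) (φ φ' ψ ψ' : ℝ → ℝ)
    (hφ1 : ∀ y ∈ Set.Icc (-R) R, HasDerivWithinAt φ (φ' y) (Set.Icc (-R) R) y)
    (hφ2 : ∀ y ∈ Set.Icc (-R) R, HasDerivWithinAt φ' (Q y * φ y) (Set.Icc (-R) R) y)
    (hψ1 : ∀ y ∈ Set.Icc (-R) R, HasDerivWithinAt ψ (ψ' y) (Set.Icc (-R) R) y)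
    (hψ2 : ∀ y ∈ Set.Icc (-R) R, HasDerivWithinAt ψ' (Q y * ψ y) (Set.Icc (-R) R) y)
    (h0 : φ (-R) = ψ (-R)) (h0' : φ' (-R) = ψ' (-R)) :
    ∀ y ∈ Set.Icc (-R) R, φ y = ψ y ∧ φ' y = ψ' y := by
  obtain ⟨C, hC⟩ := isCompact_Icc.exists_bound_of_continuousOn hQ
  set c : ℝ → ℝ := fun t => max (-R) (min R t) with hc
  have hcmem : ∀ t, c t ∈ Set.Icc (-R) R := fun t =>
    ⟨le_max_left _ _, max_le (by linarith) (min_le_left _ _)⟩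
  have hceq : ∀ t ∈ Set.Icc (-R) R, c t = t := fun t ht => by
    simp only [hc]; rw [min_eq_right ht.2, max_eq_right ht.1]
  set Qc : ℝ → ℝ := fun t => Q (c t) with hQc
  have hQcb : ∀ t, |Qc t| ≤ C := fun t => by
    simpa [Real.norm_eq_abs] using hC (c t) (hcmem t)
  set K : NNReal := (max 1 C).toNNReal with hK
  set v : ℝ → ℝ × ℝ → ℝ × ℝ := fun t x => (x.2, Qc t * x.1) with hv
  have hKge : ∀ t, |Qc t| ≤ (K : ℝ) ∧ (1:ℝ) ≤ K := fun t => by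
    have h1 : (K : ℝ) = max 1 C := Real.coe_toNNReal _
      (le_trans (by norm_num) (le_max_left 1 C))
    constructor
    · exact le_trans (hQcb t) (h1 ▸ le_max_right 1 C)
    · exact h1 ▸ le_max_left 1 C
  have hlip : ∀ t, LipschitzWith K (v t) := by
    intro t
    apply LipschitzWith.of_dist_le_mul
    intro x y
    rw [Prod.dist_eq, Prod.dist_eq]
    simp only [hv, Real.dist_eq]
    apply max_le
    · calc |x.2 - y.2| ≤ max |x.1 - y.1| |x.2 - y.2| := le_max_right _ _
        _ ≤ K * max |x.1 - y.1| |x.2 - y.2| := by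
            nlinarith [(hKge t).2, le_max_left |x.1 - y.1| |x.2 - y.2|,
              abs_nonneg (x.1 - y.1), abs_nonneg (x.2 - y.2),
              le_max_right |x.1 - y.1| |x.2 - y.2|]
    · have : Qc t * x.1 - Qc t * y.1 = Qc t * (x.1 - y.1) := by ring
      rw [this, abs_mul]
      have h1 : |x.1 - y.1| ≤ max |x.1 - y.1| |x.2 - y.2| := le_max_left _ _
      nlinarith [(hKge t).1, abs_nonneg (Qc t), abs_nonneg (x.1 - y.1),
        le_max_right |x.1 - y.1| |x.2 - y.2|, abs_nonneg (x.2 - y.2)]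
  have hIci : ∀ t ∈ Set.Ico (-R) R, Set.Icc (-R) R ∈ nhdsWithin t (Set.Ici t) := fun t ht => by
    have h1 : Set.Ici t ∩ Set.Iio R ∈ nhdsWithin t (Set.Ici t) :=
      inter_mem_nhdsWithin _ (Iio_mem_nhds ht.2)
    exact Filter.mem_of_superset h1 (fun x hx => ⟨le_trans ht.1 hx.1, le_of_lt hx.2⟩)
  have key : EqOn (fun t => (φ t, φ' t)) (fun t => (ψ t, ψ' t)) (Set.Icc (-R) R) := by
    apply ODE_solution_unique (v := v) hlip
    · exact fun y hy => ((hφ1 y hy).continuousWithinAt.prodMk (hφ2 y hy).continuousWithinAt)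
    · intro t ht
      have htI : t ∈ Set.Icc (-R) R := ⟨ht.1, le_of_lt ht.2⟩
      have h2 := (((hφ1 t htI).prodMk (hφ2 t htI)).mono_of_mem_nhdsWithin (hIci t ht))
      have h3 : v t ((fun t => (φ t, φ' t)) t) = (φ' t, Q t * φ t) := by
        simp only [hv, hQc]; rw [hceq t htI]
      rw [h3]; exact h2
    · exact fun y hy => ((hψ1 y hy).continuousWithinAt.prodMk (hψ2 y hy).continuousWithinAt)
    · intro t ht
      have htI : t ∈ Set.Icc (-R) R := ⟨ht.1, le_of_lt ht.2⟩
      have h2 := (((hψ1 t htI).prodMk (hψ2 t htI)).mono_of_mem_nhdsWithin (hIci t ht))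
      have h3 : v t ((fun t => (ψ t, ψ' t)) t) = (ψ' t, Q t * ψ t) := by
        simp only [hv, hQc]; rw [hceq t htI]
      rw [h3]; exact h2
    · simp [h0, h0']
  intro y hy
  have := key hy
  simp only [Prod.mk.injEq] at this
  exact this

/-- `μ ≥ 0` is a nonnegative eigenvalue of the linearization at the profile `V`
if and only if `h(μ) = θ_μ(R) + arctan √(μ+α) ∈ π ℤ`. -/
theorem eigenvalue_iff_angle (lam a α R : ℝ)
    (hlam : 0 < lam) (ha0 : 0 < a) (ha1 : a < 1/2) (hα : 0 < α) (hR : 0 < R)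
    (V : ℝ → ℝ) (hV : IsProfile lam a α R V)
    (μ : ℝ) (hμ : 0 ≤ μ)
    (θ : ℝ → ℝ) (hθ : IsTheta lam a α R μ V θ) :
    IsEigenvalue lam a α R V μ ↔
      ∃ k : ℤ, θ R + Real.arctan (Real.sqrt (μ + α)) = k * Real.pi := by
  obtain ⟨hθ0, hθ'⟩ := hθ
  obtain ⟨hVc2, -, -, -⟩ := hV
  set s : ℝ := Real.sqrt (μ + α) with hs
  set A : ℝ := Real.arctan s with hA
  have hRR : -R < R := by linarith
  have hu : UniqueDiffOn ℝ (Set.Icc (-R) R) := uniqueDiffOn_Icc hRR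
  have hRIcc : R ∈ Set.Icc (-R) R := ⟨le_of_lt hRR, le_rfl⟩
  have hRIcc' : (-R) ∈ Set.Icc (-R) R := ⟨le_rfl, le_of_lt hRR⟩
  -- the derivative of the cubic f
  have hfd : ∀ u : ℝ, deriv (f lam a) u
      = lam * (u - a) * (1 - u) + lam * u * (1 - u) - lam * u * (u - a) := by
    intro u
    have h : HasDerivAt (f lam a)
        (((lam * 1) * (u - a) + (lam * u) * 1) * (1 - u) + (lam * u * (u - a)) * (0 - 1)) u :=
      ((((hasDerivAt_id u).const_mul lam).mul ((hasDerivAt_id u).sub_const a)).mul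
        ((hasDerivAt_const u (1:ℝ)).sub (hasDerivAt_id u)))
    have h2 : HasDerivAt (f lam a)
        (lam * (u - a) * (1 - u) + lam * u * (1 - u) - lam * u * (u - a)) u := by
      convert h using 1; ring
    exact h2.deriv
  set q : ℝ → ℝ := fun y => deriv (f lam a) (V y) with hqdef
  have hq : ContinuousOn q (Set.Icc (-R) R) := by
    have hpoly : Continuous (fun u : ℝ =>
        lam * (u - a) * (1 - u) + lam * u * (1 - u) - lam * u * (u - a)) := by continuity
    have hVcont : ContinuousOn V (Set.Icc (-R) R) := hVc2.continuousOn
    have := hpoly.comp_continuousOn hVcont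
    exact this.congr (fun y _ => by simp only [hqdef, Function.comp]; rw [hfd])
  set Q : ℝ → ℝ := fun y => μ - q y with hQdef
  have hQ : ContinuousOn Q (Set.Icc (-R) R) := continuousOn_const.sub hq
  -- basic facts about θ and the Prüfer radius
  have hθcont : ContinuousOn θ (Set.Icc (-R) R) :=
    fun y hy => (hθ' y hy).continuousWithinAt
  set g : ℝ → ℝ := fun y => (1 + Q y) * (Real.sin (θ y) * Real.cos (θ y)) with hgdef
  have hgcont : ContinuousOn g (Set.Icc (-R) R) :=
    (continuousOn_const.add hQ).mul
      ((Real.continuous_sin.comp_continuousOn hθcont).mul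
        (Real.continuous_cos.comp_continuousOn hθcont))
  set G : ℝ → ℝ := fun y => ∫ t in (-R)..y, g t with hGdef
  have hG : ∀ y ∈ Set.Icc (-R) R, HasDerivWithinAt G (g y) (Set.Icc (-R) R) y := by
    intro y hy
    haveI : Fact (y ∈ Set.Icc (-R) R) := ⟨hy⟩
    have hint : IntervalIntegrable g volume (-R) y := by
      apply (hgcont.mono _).intervalIntegrable
      rw [uIcc_of_le hy.1]
      exact Icc_subset_Icc le_rfl hy.2
    have hmeas : StronglyMeasurableAtFilter g (nhdsWithin y (Set.Icc (-R) R)) :=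
      ⟨Set.Icc (-R) R, self_mem_nhdsWithin, hgcont.aestronglyMeasurable measurableSet_Icc⟩
    exact intervalIntegral.integral_hasDerivWithinAt_right hint hmeas (hgcont y hy)
  set r : ℝ → ℝ := fun y => Real.exp (G y) with hrdef
  have hr : ∀ y ∈ Set.Icc (-R) R, HasDerivWithinAt r (Real.exp (G y) * g y) (Set.Icc (-R) R) y :=
    fun y hy => (hG y hy).exp
  have hrpos : ∀ y, 0 < r y := fun y => Real.exp_pos _
  have hr0 : r (-R) = 1 := by
    simp only [hrdef, hGdef, intervalIntegral.integral_same, Real.exp_zero]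
  set ψ : ℝ → ℝ := fun y => r y * Real.cos (θ y) with hψdef
  set ψ1 : ℝ → ℝ := fun y => r y * Real.sin (θ y) with hψ1def
  have hψcont : ContinuousOn ψ (Set.Icc (-R) R) :=
    ((Real.continuous_exp.comp_continuousOn (fun y hy => (hG y hy).continuousWithinAt))).mul
      (Real.continuous_cos.comp_continuousOn hθcont)
  have pyth : ∀ x : ℝ, Real.sin x ^ 2 + Real.cos x ^ 2 = 1 := Real.sin_sq_add_cos_sq
  have hψd : ∀ y ∈ Set.Icc (-R) R, HasDerivWithinAt ψ (ψ1 y) (Set.Icc (-R) R) y := by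
    intro y hy
    have h : HasDerivWithinAt (fun y => r y * Real.cos (θ y)) _ (Set.Icc (-R) R) y :=
      (hr y hy).mul ((hθ' y hy).cos)
    convert h using 1
    simp only [hψ1def, hrdef, hgdef, hQdef]
    have p := pyth (θ y)
    linear_combination (-(Real.exp (G y) * Real.sin (θ y))) * p
  have hψ1d : ∀ y ∈ Set.Icc (-R) R, HasDerivWithinAt ψ1 (Q y * ψ y) (Set.Icc (-R) R) y := by
    intro y hy
    have h : HasDerivWithinAt (fun y => r y * Real.sin (θ y)) _ (Set.Icc (-R) R) y :=
      (hr y hy).mul ((hθ' y hy).sin)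
    convert h using 1
    simp only [hψdef, hrdef, hgdef, hQdef]
    have p := pyth (θ y)
    linear_combination (-((μ - q y) * Real.exp (G y) * Real.cos (θ y))) * p
  have hpdψ : ∀ y ∈ Set.Icc (-R) R, pd R ψ y = ψ1 y :=
    fun y hy => (hψd y hy).derivWithin (hu y hy)
  have hpd2ψ : ∀ y ∈ Set.Icc (-R) R, pd R (pd R ψ) y = Q y * ψ y := by
    intro y hy
    have h1 : pd R (pd R ψ) y = derivWithin ψ1 (Set.Icc (-R) R) y :=
      derivWithin_congr hpdψ (hpdψ y hy)
    rw [h1]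
    exact (hψ1d y hy).derivWithin (hu y hy)
  -- trigonometric facts about A
  have hcosA : 0 < Real.cos A := Real.cos_arctan_pos s
  have hsinA : Real.sin A = s * Real.cos A := by
    rw [hA, Real.sin_arctan, Real.cos_arctan]; ring
  have hψm : ψ (-R) = Real.cos A := by simp [hψdef, hr0, hθ0]
  have hψ1m : ψ1 (-R) = s * Real.cos A := by simp [hψ1def, hr0, hθ0, hsinA]
  constructor
  · -- forward direction
    rintro ⟨φ, hφc2, hφnt, hφode, hφb1, hφb2⟩
    rw [← hs] at hφb1 hφb2
    rw [show (2 : WithTop ℕ∞) = 1 + 1 by norm_num, contDiffOn_succ_iff_derivWithin hu] at hφc2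
    obtain ⟨hφdiff, -, hφ'c1⟩ := hφc2
    rw [show (1 : WithTop ℕ∞) = 0 + 1 by norm_num, contDiffOn_succ_iff_derivWithin hu] at hφ'c1
    obtain ⟨hφ'diff, -, hφ''0⟩ := hφ'c1
    rw [contDiffOn_zero] at hφ''0
    have hφcont : ContinuousOn φ (Set.Icc (-R) R) := hφdiff.continuousOn
    have hφ1 : ∀ y ∈ Set.Icc (-R) R, HasDerivWithinAt φ (pd R φ y) (Set.Icc (-R) R) y :=
      fun y hy => (hφdiff y hy).hasDerivWithinAt
    have hφ2 : ∀ y ∈ Set.Icc (-R) R,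
        HasDerivWithinAt (pd R φ) (pd R (pd R φ) y) (Set.Icc (-R) R) y :=
      fun y hy => (hφ'diff y hy).hasDerivWithinAt
    have heqIoo : ∀ y ∈ Set.Ioo (-R) R, pd R (pd R φ) y = Q y * φ y := by
      intro y hy
      have := hφode y hy
      simp only [hQdef, hqdef]
      linarith [this]
    have hext : ∀ y ∈ Set.Icc (-R) R, pd R (pd R φ) y = Q y * φ y := by
      intro y hy
      have hyc : y ∈ closure (Set.Ioo (-R) R) := by
        rw [closure_Ioo (ne_of_lt hRR)]; exact hy
      have hne : (nhdsWithin y (Set.Ioo (-R) R)).NeBot :=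
        mem_closure_iff_nhdsWithin_neBot.mp hyc
      have t1 : Tendsto (pd R (pd R φ)) (nhdsWithin y (Set.Ioo (-R) R))
          (nhds (pd R (pd R φ) y)) := (hφ''0 y hy).mono Ioo_subset_Icc_self
      have t2 : Tendsto (fun x => Q x * φ x) (nhdsWithin y (Set.Ioo (-R) R))
          (nhds (Q y * φ y)) := ((hQ.mul hφcont) y hy).mono Ioo_subset_Icc_self
      have t3 : Tendsto (pd R (pd R φ)) (nhdsWithin y (Set.Ioo (-R) R))
          (nhds (Q y * φ y)) := by
        apply t2.congr'
        filter_upwards [self_mem_nhdsWithin] with x hx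
        exact (heqIoo x hx).symm
      exact tendsto_nhds_unique t1 t3
    have hφ2' : ∀ y ∈ Set.Icc (-R) R,
        HasDerivWithinAt (pd R φ) (Q y * φ y) (Set.Icc (-R) R) y :=
      fun y hy => (hext y hy) ▸ hφ2 y hy
    -- φ(-R) ≠ 0
    have hφm : φ (-R) ≠ 0 := by
      intro h0
      have hb0 : pd R φ (-R) = 0 := by rw [hφb1, h0, mul_zero]
      have := second_order_unique hR Q hQ φ (pd R φ) (fun _ => 0) (fun _ => 0)
        hφ1 hφ2' (fun y hy => by simpa using (hasDerivWithinAt_const y (Set.Icc (-R) R) (0:ℝ)))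
        (fun y hy => by simpa using (hasDerivWithinAt_const y (Set.Icc (-R) R) (0:ℝ)))
        h0 hb0
      obtain ⟨y, hy, hyne⟩ := hφnt
      exact hyne (this y hy).1
    set cc : ℝ := φ (-R) / Real.cos A with hcc
    have hccne : cc ≠ 0 := div_ne_zero hφm (ne_of_gt hcosA)
    have hkey := second_order_unique hR Q hQ φ (pd R φ)
      (fun y => cc * ψ y) (fun y => cc * ψ1 y) hφ1 hφ2'
      (fun y hy => (hψd y hy).const_mul cc)
      (fun y hy => by
        have : HasDerivWithinAt (fun y => cc * ψ1 y) (cc * (Q y * ψ y)) (Set.Icc (-R) R) y :=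
          (hψ1d y hy).const_mul cc
        convert this using 1; ring)
      (by show φ (-R) = cc * ψ (-R)
          rw [hψm, hcc, div_mul_cancel₀ _ (ne_of_gt hcosA)])
      (by show pd R φ (-R) = cc * ψ1 (-R)
          rw [hφb1, hψ1m, hcc]; field_simp)
    have hφR : φ R = cc * ψ R := (hkey R hRIcc).1
    have hφ'R : pd R φ R = cc * ψ1 R := (hkey R hRIcc).2
    have hφRne : φ R ≠ 0 := by
      intro h0
      have h1 : pd R φ R = 0 := by rw [hφb2, h0, mul_zero]
      have hcos0 : Real.cos (θ R) = 0 := by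
        have := hφR; rw [h0, hψdef] at this
        have := (mul_eq_zero.mp this.symm).resolve_left hccne
        exact (mul_eq_zero.mp this).resolve_left (ne_of_gt (hrpos R))
      have hsin0 : Real.sin (θ R) = 0 := by
        have := hφ'R; rw [h1, hψ1def] at this
        have := (mul_eq_zero.mp this.symm).resolve_left hccne
        exact (mul_eq_zero.mp this).resolve_left (ne_of_gt (hrpos R))
      have := pyth (θ R)
      rw [hcos0, hsin0] at this; norm_num at this
    have hcosθR : Real.cos (θ R) ≠ 0 := by
      intro h0
      apply hφRne
      rw [hφR, hψdef]; simp [h0]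
    have hsinθR : Real.sin (θ R) = -(s * Real.cos (θ R)) := by
      have e1 := hφ'R
      rw [hφb2, hφR] at e1
      simp only [hψdef, hψ1def] at e1
      have h2 : cc * r R ≠ 0 := mul_ne_zero hccne (ne_of_gt (hrpos R))
      have h3 : (cc * r R) * Real.sin (θ R) = (cc * r R) * (-(s * Real.cos (θ R))) := by
        linear_combination -e1
      exact mul_left_cancel₀ h2 h3
    have hzero : Real.sin (θ R + A) = 0 := by
      rw [Real.sin_add, hsinθR, hsinA]; ring
    obtain ⟨n, hn⟩ := Real.sin_eq_zero_iff.mp hzero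
    exact ⟨n, hn.symm⟩
  · -- backward direction
    rintro ⟨k, hk⟩
    have hθR : θ R = k * Real.pi - A := by linarith
    have hsk : Real.sin ((k : ℝ) * Real.pi) = 0 := Real.sin_int_mul_pi k
    have hck : Real.cos ((k : ℝ) * Real.pi) ≠ 0 := by
      intro h0
      have := pyth ((k : ℝ) * Real.pi)
      rw [hsk, h0] at this; norm_num at this
    have hsinθR : Real.sin (θ R) = -(Real.cos ((k:ℝ) * Real.pi) * Real.sin A) := by
      rw [hθR, Real.sin_sub, hsk]; ring
    have hcosθR : Real.cos (θ R) = Real.cos ((k:ℝ) * Real.pi) * Real.cos A := by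
      rw [hθR, Real.cos_sub, hsk]; ring
    have hcosθRne : Real.cos (θ R) ≠ 0 := by
      rw [hcosθR]; exact mul_ne_zero hck (ne_of_gt hcosA)
    refine ⟨ψ, ?_, ?_, ?_, ?_, ?_⟩
    · exact contDiffOn_two_of_derivs hR ψ ψ1 (fun y => Q y * ψ y) hψd hψ1d (hQ.mul hψcont)
    · refine ⟨R, hRIcc, ?_⟩
      simp only [hψdef]
      exact mul_ne_zero (ne_of_gt (hrpos R)) hcosθRne
    · intro y hy
      have h1 := hpd2ψ y (Ioo_subset_Icc_self hy)
      rw [h1]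
      simp only [hQdef, hqdef]
      ring
    · rw [hpdψ (-R) hRIcc', ← hs, hψ1m, hψm]
    · rw [hpdψ R hRIcc, ← hs]
      show r R * Real.sin (θ R) = -s * (r R * Real.cos (θ R))
      rw [hsinθR, hcosθR, hsinA]; ring
end

section
/- Let V be a profile and let μ>sup_{y∈[−R,R]}|f'(V(y))|. Then θ_μ(y)∈(0,π/2) for all y∈[−R,R], and consequently h(μ)∈(0,π). -/
open Set MeasureTheory Filter Topology

/-- If `μ > sup_{y ∈ [-R,R]} |f'(V(y))|`, then `θ_μ(y) ∈ (0, π/2)` for all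
`y ∈ [-R,R]`, and consequently `h(μ) = θ_μ(R) + arctan √(μ+α) ∈ (0, π)`. -/
theorem angle_in_quadrant_for_large_mu (lam a α R : ℝ)
    (hlam : 0 < lam) (ha0 : 0 < a) (ha1 : a < 1/2) (hα : 0 < α) (hR : 0 < R)
    (V : ℝ → ℝ) (hV : IsProfile lam a α R V)
    (μ : ℝ) (hμ : ∀ y ∈ Set.Icc (-R) R, |deriv (f lam a) (V y)| < μ)
    (θ : ℝ → ℝ) (hθ : IsTheta lam a α R μ V θ) :
    (∀ y ∈ Set.Icc (-R) R, θ y ∈ Set.Ioo 0 (Real.pi / 2)) ∧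
    θ R + Real.arctan (Real.sqrt (μ + α)) ∈ Set.Ioo 0 Real.pi := by
  obtain ⟨hθinit, hθode⟩ := hθ
  have hRR : (-R : ℝ) ≤ R := by linarith
  have hRmem : (-R : ℝ) ∈ Set.Icc (-R) R := ⟨le_refl _, hRR⟩
  have hμα : 0 < μ + α := by
    have h1 := hμ (-R) hRmem
    have h2 := abs_nonneg (deriv (f lam a) (V (-R)))
    linarith
  have hθa0 : 0 < θ (-R) := by
    rw [hθinit]; exact by rw [← Real.arctan_zero]; exact Real.arctan_strictMono (Real.sqrt_pos.2 hμα)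
  have hθapi : θ (-R) < Real.pi / 2 := by
    rw [hθinit]; exact Real.arctan_lt_pi_div_two _
  have hcont : ContinuousOn θ (Set.Icc (-R) R) := fun y hy =>
    (hθode y hy).continuousWithinAt
  have key : ∀ y ∈ Set.Icc (-R) R, θ y ∈ Set.Ioo 0 (Real.pi / 2) := by
    by_contra hcon
    push_neg at hcon
    obtain ⟨y₀, hy₀, hy₀'⟩ := hcon
    set T : Set ℝ := Set.Icc (-R) R ∩ θ ⁻¹' (Set.Iic 0 ∪ Set.Ici (Real.pi / 2)) with hTdef
    have hy₀T : y₀ ∈ T := by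
      refine ⟨hy₀, ?_⟩
      rcases lt_or_ge 0 (θ y₀) with h | h
      · right; by_contra h'
        exact hy₀' ⟨h, lt_of_not_ge fun hle => h' hle⟩
      · exact Or.inl h
    have hTclosed : IsClosed T :=
      hcont.preimage_isClosed_of_isClosed isClosed_Icc
        ((isClosed_Iic).union (isClosed_Ici))
    have hTne : T.Nonempty := ⟨y₀, hy₀T⟩
    have hTbdd : BddBelow T := ⟨-R, fun z hz => hz.1.1⟩
    set s := sInf T with hs
    have hsT : s ∈ T := hTclosed.csInf_mem hTne hTbdd
    have hsIcc : s ∈ Set.Icc (-R) R := hsT.1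
    have haT : (-R : ℝ) ∉ T := by
      rintro ⟨-, h | h⟩
      · exact absurd hθa0 (not_lt.2 h)
      · exact absurd hθapi (not_lt.2 h)
    have hslt : -R < s := lt_of_le_of_ne hsIcc.1 (fun h => haT (h ▸ hsT))
    -- points strictly before s (within Icc) have θ ∈ (0, π/2)
    have hbefore : ∀ y ∈ Set.Ico (-R) s, 0 < θ y ∧ θ y < Real.pi / 2 := by
      intro y hy
      have hyIcc : y ∈ Set.Icc (-R) R := ⟨hy.1, hy.2.le.trans hsIcc.2⟩
      by_contra h
      push_neg at h
      have hyT : y ∈ T := by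
        refine ⟨hyIcc, ?_⟩
        rcases lt_or_ge 0 (θ y) with h1 | h1
        · exact Or.inr (h h1)
        · exact Or.inl h1
      exact absurd (csInf_le hTbdd hyT) (not_le.2 hy.2)
    have hneBot : (𝓝[Set.Ico (-R) s] s).NeBot := right_nhdsWithin_Ico_neBot hslt
    -- θ s ∈ [0, π/2] by continuity from the left
    have htend : Tendsto θ (𝓝[Set.Ico (-R) s] s) (𝓝 (θ s)) :=
      (hcont s hsIcc).mono_left (nhdsWithin_mono _ (fun z hz => ⟨hz.1, hz.2.le.trans hsIcc.2⟩))
    have hθs0 : 0 ≤ θ s :=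
      ge_of_tendsto htend (eventually_mem_nhdsWithin.mono fun y hy => (hbefore y hy).1.le)
    have hθspi : θ s ≤ Real.pi / 2 :=
      le_of_tendsto htend (eventually_mem_nhdsWithin.mono fun y hy => (hbefore y hy).2.le)
    have hμs : deriv (f lam a) (V s) < μ := (abs_lt.1 (hμ s hsIcc)).2
    have hder := hθode s hsIcc
    have hslope := hasDerivWithinAt_iff_tendsto_slope.1 hder
    have hsub : Set.Ico (-R) s ⊆ Set.Icc (-R) R \ {s} := by
      intro z hz
      exact ⟨⟨hz.1, hz.2.le.trans hsIcc.2⟩, ne_of_lt hz.2⟩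
    have hslope' : Tendsto (slope θ s) (𝓝[Set.Ico (-R) s] s)
        (𝓝 (-(Real.sin (θ s))^2 + (μ - deriv (f lam a) (V s)) * (Real.cos (θ s))^2)) :=
      hslope.mono_left (nhdsWithin_mono _ hsub)
    rcases hsT.2 with hcase | hcase
    · -- θ s = 0, derivative positive, but slope from left ≤ 0
      have hθse : θ s = 0 := le_antisymm hcase hθs0
      have hdval : -(Real.sin (θ s))^2 + (μ - deriv (f lam a) (V s)) * (Real.cos (θ s))^2
          = μ - deriv (f lam a) (V s) := by
        rw [hθse]; simp
      rw [hdval] at hslope'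
      have hpos : (0:ℝ) < μ - deriv (f lam a) (V s) := by linarith
      have hev : ∀ᶠ y in 𝓝[Set.Ico (-R) s] s, 0 < slope θ s y :=
        hslope'.eventually (eventually_gt_nhds hpos)
      obtain ⟨y, hyIco, hyslope⟩ := (hev.and eventually_mem_nhdsWithin).exists
      have h1 : θ y - θ s > 0 := by
        have := (hbefore y hyslope).1
        rw [hθse]; linarith
      have h2 : y - s < 0 := sub_neg.2 hyslope.2
      have : slope θ s y < 0 := by
        rw [slope_def_field]
        exact div_neg_of_pos_of_neg (by linarith) h2
      linarith
    · -- θ s = π/2, derivative -1, but slope from left ≥ 0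
      have hθse : θ s = Real.pi / 2 := le_antisymm hθspi hcase
      have hdval : -(Real.sin (θ s))^2 + (μ - deriv (f lam a) (V s)) * (Real.cos (θ s))^2
          = -1 := by
        rw [hθse]; simp
      rw [hdval] at hslope'
      have hev : ∀ᶠ y in 𝓝[Set.Ico (-R) s] s, slope θ s y < 0 :=
        hslope'.eventually (eventually_lt_nhds (by norm_num : (-1:ℝ) < 0))
      obtain ⟨y, hyIco, hyslope⟩ := (hev.and eventually_mem_nhdsWithin).exists
      have h1 : θ y - θ s < 0 := by
        have := (hbefore y hyslope).2
        rw [hθse]; linarith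
      have h2 : y - s < 0 := sub_neg.2 hyslope.2
      have : 0 < slope θ s y := by
        rw [slope_def_field]
        exact div_pos_of_neg_of_neg h1 h2
      linarith
  refine ⟨key, ?_⟩
  have hR' := key R ⟨hRR, le_refl R⟩
  have h1 : 0 < Real.arctan (Real.sqrt (μ + α)) := by rw [← Real.arctan_zero]; exact Real.arctan_strictMono (Real.sqrt_pos.2 hμα)
  have h2 : Real.arctan (Real.sqrt (μ + α)) < Real.pi / 2 := Real.arctan_lt_pi_div_two _
  constructor
  · linarith [hR'.1]
  · have := hR'.2
    linarith
end

section
/- Let V be a profile and let μ₁>μ₂≥0. Then θ_{μ₁}(y)>θ_{μ₂}(y) for all y∈[−R,R]; consequently the function μ↦h(μ) is strictly increasing on [0,∞). -/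
open Set MeasureTheory Filter

lemma cos_sq_hasDerivAt (t : ℝ) :
    HasDerivAt (fun t => Real.cos t ^ 2) (-(2 * Real.sin t * Real.cos t)) t := by
  have h := (Real.hasDerivAt_cos t).fun_pow 2
  refine h.congr_deriv ?_
  ring

lemma cos_sq_lip (x y : ℝ) : |Real.cos x ^ 2 - Real.cos y ^ 2| ≤ |x - y| := by
  have hL : LipschitzWith 1 (fun t : ℝ => Real.cos t ^ 2) := by
    apply lipschitzWith_of_nnnorm_deriv_le (fun t => (cos_sq_hasDerivAt t).differentiableAt)
    intro t
    rw [(cos_sq_hasDerivAt t).deriv]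
    have h1 : |(-(2 * Real.sin t * Real.cos t))| ≤ 1 := by
      rw [abs_neg, ← Real.sin_two_mul]
      exact abs_le.mpr ⟨Real.neg_one_le_sin _, Real.sin_le_one _⟩
    rw [← Real.norm_eq_abs] at h1
    exact_mod_cast h1
  have := hL.dist_le_mul x y
  simpa [Real.dist_eq] using this

lemma f_hasDerivAt (lam a u : ℝ) :
    HasDerivAt (f lam a)
      (lam * (u - a) * (1 - u) + lam * u * (1 - u) - lam * u * (u - a)) u := by
  have h1 : HasDerivAt (fun u : ℝ => lam * u) lam u := by
    simpa using (hasDerivAt_id u).const_mul lam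
  have h2 : HasDerivAt (fun u : ℝ => u - a) 1 u := (hasDerivAt_id u).sub_const a
  have h3 : HasDerivAt (fun u : ℝ => 1 - u) (-1) u := by
    simpa using (hasDerivAt_id' u).const_sub (1:ℝ)
  have h := (h1.fun_mul h2).fun_mul h3
  refine h.congr_deriv ?_
  ring

lemma deriv_f_eq (lam a u : ℝ) :
    deriv (f lam a) u = lam * (u - a) * (1 - u) + lam * u * (1 - u) - lam * u * (u - a) :=
  (f_hasDerivAt lam a u).deriv

/-- Monotonicity of the Prüfer angle in `μ`: if `μ₁ > μ₂ ≥ 0` then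
`θ_{μ₁} > θ_{μ₂}` on `[-R,R]`; consequently
`h(μ) = θ_μ(R) + arctan √(μ+α)` is strictly increasing on `[0,∞)`. -/
theorem angle_strict_mono_in_mu (lam a α R : ℝ)
    (hlam : 0 < lam) (ha0 : 0 < a) (ha1 : a < 1/2) (hα : 0 < α) (hR : 0 < R)
    (V : ℝ → ℝ) (hV : IsProfile lam a α R V)
    (μ₁ μ₂ : ℝ) (hμ₂ : 0 ≤ μ₂) (hμ : μ₂ < μ₁)
    (θ₁ θ₂ : ℝ → ℝ)
    (hθ₁ : IsTheta lam a α R μ₁ V θ₁) (hθ₂ : IsTheta lam a α R μ₂ V θ₂) :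
    (∀ y ∈ Set.Icc (-R) R, θ₂ y < θ₁ y) ∧
    θ₂ R + Real.arctan (Real.sqrt (μ₂ + α)) <
      θ₁ R + Real.arctan (Real.sqrt (μ₁ + α)) := by
  obtain ⟨hθ₁0, hθ₁d⟩ := hθ₁
  obtain ⟨hθ₂0, hθ₂d⟩ := hθ₂
  have hRR : -R ≤ R := by linarith
  have hmemL : -R ∈ Set.Icc (-R) R := ⟨le_rfl, hRR⟩
  have hmemR : R ∈ Set.Icc (-R) R := ⟨hRR, le_rfl⟩
  set c : ℝ → ℝ := fun y => deriv (f lam a) (V y) with hc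
  -- arctan comparison
  have harctan : Real.arctan (Real.sqrt (μ₂ + α)) < Real.arctan (Real.sqrt (μ₁ + α)) :=
    Real.arctan_strictMono (Real.sqrt_lt_sqrt (by linarith) (by linarith))
  -- continuity and bound of the coefficient
  have hVc : ContinuousOn V (Set.Icc (-R) R) := hV.1.continuousOn
  have hccont : ContinuousOn (fun y => 1 + μ₂ - c y) (Set.Icc (-R) R) := by
    have hpoly : Continuous (fun u : ℝ =>
        1 + μ₂ - (lam * (u - a) * (1 - u) + lam * u * (1 - u) - lam * u * (u - a))) := by
      continuity
    have : (fun y => 1 + μ₂ - c y) = (fun u : ℝ =>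
        1 + μ₂ - (lam * (u - a) * (1 - u) + lam * u * (1 - u) - lam * u * (u - a))) ∘ V := by
      funext y
      simp [hc, deriv_f_eq, Function.comp]
    rw [this]
    exact hpoly.comp_continuousOn hVc
  obtain ⟨K, hK⟩ := isCompact_Icc.exists_bound_of_continuousOn hccont
  have hK0 : 0 ≤ K := le_trans (norm_nonneg _) (hK (-R) hmemL)
  set w : ℝ → ℝ := fun y => θ₁ y - θ₂ y with hw
  have hw0 : 0 < w (-R) := by
    simp only [hw, hθ₁0, hθ₂0]
    linarith
  -- derivatives
  set D : ℝ → ℝ := fun y =>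
    (-(Real.sin (θ₁ y))^2 + (μ₁ - c y) * (Real.cos (θ₁ y))^2) -
    (-(Real.sin (θ₂ y))^2 + (μ₂ - c y) * (Real.cos (θ₂ y))^2) with hD
  have hwd : ∀ y ∈ Set.Icc (-R) R, HasDerivWithinAt w (D y) (Set.Icc (-R) R) y :=
    fun y hy => (hθ₁d y hy).sub (hθ₂d y hy)
  have hexp : ∀ y : ℝ, HasDerivAt (fun y => Real.exp (K * y)) (Real.exp (K * y) * K) y := by
    intro y
    have := ((hasDerivAt_id y).const_mul K).exp
    simpa using this
  set z : ℝ → ℝ := fun y => w y * Real.exp (K * y) with hz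
  have hzd : ∀ y ∈ Set.Icc (-R) R,
      HasDerivWithinAt z (D y * Real.exp (K * y) + w y * (Real.exp (K * y) * K))
        (Set.Icc (-R) R) y :=
    fun y hy => (hwd y hy).mul ((hexp y).hasDerivWithinAt)
  have hzc : ContinuousOn z (Set.Icc (-R) R) :=
    fun y hy => (hzd y hy).continuousWithinAt
  -- key pointwise inequality
  have key : ∀ y ∈ Set.Icc (-R) R, 0 ≤ w y → 0 ≤ D y + K * w y := by
    intro y hy hwy
    have hDval : D y = (1 + μ₂ - c y) * (Real.cos (θ₁ y) ^ 2 - Real.cos (θ₂ y) ^ 2)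
        + (μ₁ - μ₂) * Real.cos (θ₁ y) ^ 2 := by
      simp only [hD, Real.sin_sq]
      ring
    have h1 : |Real.cos (θ₁ y) ^ 2 - Real.cos (θ₂ y) ^ 2| ≤ w y := by
      refine le_trans (cos_sq_lip _ _) ?_
      rw [abs_of_nonneg hwy]
    have h2 : |1 + μ₂ - c y| ≤ K := by
      have := hK y hy
      rwa [Real.norm_eq_abs] at this
    have h3 : (1 + μ₂ - c y) * (Real.cos (θ₁ y) ^ 2 - Real.cos (θ₂ y) ^ 2) ≥ -(K * w y) := by
      have habs : |(1 + μ₂ - c y) * (Real.cos (θ₁ y) ^ 2 - Real.cos (θ₂ y) ^ 2)| ≤ K * w y := by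
        rw [abs_mul]
        exact mul_le_mul h2 h1 (abs_nonneg _) hK0
      have := neg_abs_le ((1 + μ₂ - c y) * (Real.cos (θ₁ y) ^ 2 - Real.cos (θ₂ y) ^ 2))
      linarith
    have h4 : 0 ≤ (μ₁ - μ₂) * Real.cos (θ₁ y) ^ 2 :=
      mul_nonneg (by linarith) (sq_nonneg _)
    rw [hDval]
    linarith
  -- main claim: w > 0 on [-R,R]
  have main : ∀ y ∈ Set.Icc (-R) R, 0 < w y := by
    by_contra hcon
    push_neg at hcon
    obtain ⟨y₀, hy₀, hwy₀⟩ := hcon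
    set S : Set ℝ := {y | y ∈ Set.Icc (-R) R ∧ w y ≤ 0} with hS
    have hSne : S.Nonempty := ⟨y₀, hy₀, hwy₀⟩
    have hSbdd : BddBelow S := ⟨-R, fun t ht => ht.1.1⟩
    have hwc : ContinuousOn w (Set.Icc (-R) R) :=
      fun y hy => (hwd y hy).continuousWithinAt
    have hScl : IsClosed S := by
      have : S = Set.Icc (-R) R ∩ w ⁻¹' (Set.Iic 0) := by
        ext t
        simp [hS, Set.mem_setOf_eq, Set.mem_Iic, and_comm]
      rw [this]
      exact hwc.preimage_isClosed_of_isClosed isClosed_Icc isClosed_Iic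
    set T := sInf S with hT
    have hTS : T ∈ S := hScl.csInf_mem hSne hSbdd
    have hTIcc : T ∈ Set.Icc (-R) R := hTS.1
    have hwT : w T ≤ 0 := hTS.2
    have hTne : T ≠ -R := by
      intro h
      rw [h] at hwT
      linarith
    have hTgt : -R < T := lt_of_le_of_ne hTIcc.1 (Ne.symm hTne)
    have hTR : T ≤ R := hTIcc.2
    have hpos : ∀ t ∈ Set.Ico (-R) T, 0 < w t := by
      intro t ht
      by_contra h
      push_neg at h
      have htS : t ∈ S := ⟨⟨ht.1, le_trans ht.2.le hTR⟩, h⟩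
      have := csInf_le hSbdd htS
      exact absurd this (not_le.mpr ht.2)
    have hsub : Set.Icc (-R) T ⊆ Set.Icc (-R) R := Set.Icc_subset_Icc le_rfl hTR
    have hmono : MonotoneOn z (Set.Icc (-R) T) := by
      apply monotoneOn_of_deriv_nonneg (convex_Icc _ _) (hzc.mono hsub)
      · rw [interior_Icc]
        intro y hy
        have hys : y ∈ Set.Icc (-R) R := hsub (Set.Ioo_subset_Icc_self hy)
        have hda : HasDerivAt z (D y * Real.exp (K * y) + w y * (Real.exp (K * y) * K)) y :=
          (hzd y hys).hasDerivAt (Icc_mem_nhds hy.1 (lt_of_lt_of_le hy.2 hTR))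
        exact hda.differentiableAt.differentiableWithinAt
      · rw [interior_Icc]
        intro y hy
        have hys : y ∈ Set.Icc (-R) R := hsub (Set.Ioo_subset_Icc_self hy)
        have hda : HasDerivAt z (D y * Real.exp (K * y) + w y * (Real.exp (K * y) * K)) y :=
          (hzd y hys).hasDerivAt (Icc_mem_nhds hy.1 (lt_of_lt_of_le hy.2 hTR))
        rw [hda.deriv]
        have hwy : 0 ≤ w y := (hpos y ⟨hy.1.le, hy.2⟩).le
        have hkey := key y hys hwy
        have hepos := Real.exp_pos (K * y)
        nlinarith
    have hle : z (-R) ≤ z T :=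
      hmono ⟨le_rfl, hTgt.le⟩ ⟨hTgt.le, le_rfl⟩ hTgt.le
    have hzL : 0 < z (-R) := mul_pos hw0 (Real.exp_pos _)
    have hzT : z T ≤ 0 := mul_nonpos_of_nonpos_of_nonneg hwT (Real.exp_pos _).le
    linarith
  refine ⟨fun y hy => by have := main y hy; simp only [hw] at this; linarith, ?_⟩
  have := main R hmemR
  simp only [hw] at this
  linarith
end

section
/- Let V be a profile and let k∈ℕ. Then h(0)∈(−kπ,(1−k)π] if and only if the set {μ∈[0,∞) : μ is a nonnegative eigenvalue of the linearization at V} is finite with exactly k elements. -/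
open Set MeasureTheory Filter

namespace SLCount

open Set Filter Real Topology

lemma hasDerivWithinAt_Ici_of_Icc {E : Type*} [NormedAddCommGroup E] [NormedSpace ℝ E]
    {f : ℝ → E} {d : E} {a b t : ℝ} (ht : t ∈ Ico a b)
    (h : HasDerivWithinAt f d (Icc a b) t) : HasDerivWithinAt f d (Ici t) t := by
  apply h.mono_of_mem_nhdsWithin
  rw [mem_nhdsWithin]
  exact ⟨Iio b, isOpen_Iio, ht.2, fun x hx => ⟨ht.1.trans hx.2, le_of_lt hx.1⟩⟩

/-- First-crossing lemma: if `w a < 0` and `w' < 0` whenever `w = 0`, then `w < 0` on `[a,b]`. -/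
lemma neg_on_Icc_of_deriv_neg {a b : ℝ} {w d : ℝ → ℝ}
    (hw : ∀ y ∈ Icc a b, HasDerivWithinAt w (d y) (Icc a b) y)
    (h0 : w a < 0) (hneg : ∀ y ∈ Icc a b, w y = 0 → d y < 0) :
    ∀ y ∈ Icc a b, w y < 0 := by
  by_contra hcon
  push_neg at hcon
  obtain ⟨z, hz, hz0⟩ := hcon
  have wcont : ContinuousOn w (Icc a b) := fun y hy => (hw y hy).continuousWithinAt
  set S : Set ℝ := Icc a b ∩ w ⁻¹' (Ici 0) with hS
  have hSclosed : IsClosed S := wcont.preimage_isClosed_of_isClosed isClosed_Icc isClosed_Ici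
  have hSne : S.Nonempty := ⟨z, hz, hz0⟩
  have hSbdd : BddBelow S := bddBelow_Icc.mono inter_subset_left
  set t := sInf S with htdef
  have htS : t ∈ S := hSclosed.csInf_mem hSne hSbdd
  have htIcc : t ∈ Icc a b := htS.1
  have htw : 0 ≤ w t := htS.2
  have hat : a < t := by
    rcases lt_or_eq_of_le htIcc.1 with h | h
    · exact h
    · exact absurd (h ▸ htw) (not_le.mpr h0)
  have hIco : ∀ y ∈ Ico a t, w y < 0 := by
    intro y hy
    by_contra h
    push_neg at h
    have hyS : y ∈ S := ⟨⟨hy.1, hy.2.le.trans htIcc.2⟩, h⟩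
    exact absurd (csInf_le hSbdd hyS) (not_le.mpr hy.2)
  have hne : (𝓝[Ico a t] t).NeBot := by
    rw [← mem_closure_iff_nhdsWithin_neBot, closure_Ico hat.ne]
    exact ⟨le_of_lt hat, le_refl t⟩
  have hwt0 : w t = 0 := by
    refine le_antisymm ?_ htw
    have htend : Tendsto w (𝓝[Ico a t] t) (𝓝 (w t)) :=
      (wcont t htIcc).mono (fun y hy => ⟨hy.1, hy.2.le.trans htIcc.2⟩)
    refine le_of_tendsto htend ?_
    filter_upwards [eventually_mem_nhdsWithin] with y hy using (hIco y hy).le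
  have hd : d t < 0 := hneg t htIcc hwt0
  have hslope := hasDerivWithinAt_iff_tendsto_slope.mp (hw t htIcc)
  have hsub : Ico a t ⊆ Icc a b \ {t} := fun y hy =>
    ⟨⟨hy.1, hy.2.le.trans htIcc.2⟩, ne_of_lt hy.2⟩
  have hslope' : Tendsto (slope w t) (𝓝[Ico a t] t) (𝓝 (d t)) :=
    hslope.mono_left (nhdsWithin_mono t hsub)
  have hev : ∀ᶠ y in 𝓝[Ico a t] t, slope w t y < 0 := hslope'.eventually (gt_mem_nhds hd)
  obtain ⟨y, hylt, hymem⟩ := (hev.and eventually_mem_nhdsWithin).exists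
  have hyq : (w y - w t) / (y - t) < 0 := by
    rw [← slope_def_field] at *
    exact hylt
  rw [hwt0, sub_zero] at hyq
  rcases div_neg_iff.mp hyq with ⟨hwpos, _⟩ | ⟨_, hc⟩
  · exact absurd hwpos (not_lt.mpr (hIco y hymem).le)
  · linarith [hymem.2]

noncomputable def g (q : ℝ → ℝ) (μ : ℝ) (y x : ℝ) : ℝ :=
  -(Real.sin x)^2 + (μ - q y) * (Real.cos x)^2

lemma g_eq (q : ℝ → ℝ) (μ y x : ℝ) :
    g q μ y x = (1 + μ - q y)/2 * (1 + Real.cos (2*x)) - 1 := by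
  have hc : (Real.cos x)^2 = (1 + Real.cos (2*x))/2 := by
    rw [Real.cos_two_mul]; ring
  have hs : (Real.sin x)^2 = 1 - (Real.cos x)^2 := by
    have := Real.sin_sq_add_cos_sq x; linarith
  rw [g, hs, hc]; ring

lemma abs_g_le {q : ℝ → ℝ} {Q : ℝ} (hQ : ∀ y, |q y| ≤ Q) (μ y x : ℝ) :
    |g q μ y x| ≤ 1 + |μ| + Q := by
  have h2 : (Real.cos x)^2 ≤ 1 := Real.cos_sq_le_one x
  have h3 : (Real.sin x)^2 ≤ 1 := Real.sin_sq_le_one x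
  have h5 : (0:ℝ) ≤ (Real.cos x)^2 := sq_nonneg _
  have h6 : (0:ℝ) ≤ (Real.sin x)^2 := sq_nonneg _
  have h4 : -Q ≤ q y ∧ q y ≤ Q := abs_le.mp (hQ y)
  have h7 : -|μ| ≤ μ ∧ μ ≤ |μ| := ⟨neg_abs_le μ, le_abs_self μ⟩
  rw [abs_le, g]
  constructor <;> nlinarith [h4.1, h4.2, h7.1, h7.2]

lemma dist_g_le {q : ℝ → ℝ} {Q : ℝ} (hQ : ∀ y, |q y| ≤ Q) (μ y x x' : ℝ) :
    dist (g q μ y x) (g q μ y x') ≤ (1 + |μ| + Q) * dist x x' := by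
  have h4 : -Q ≤ q y ∧ q y ≤ Q := abs_le.mp (hQ y)
  have h7 : -|μ| ≤ μ ∧ μ ≤ |μ| := ⟨neg_abs_le μ, le_abs_self μ⟩
  have hQ0 : 0 ≤ Q := (abs_nonneg _).trans (hQ y)
  have lipcos : LipschitzWith 1 Real.cos := by
    apply lipschitzWith_of_nnnorm_deriv_le Real.differentiable_cos
    intro z
    rw [Real.deriv_cos]
    rw [← NNReal.coe_le_coe]
    simpa using Real.abs_sin_le_one (-z)
  have hcos : dist (Real.cos (2*x)) (Real.cos (2*x')) ≤ 2 * dist x x' := by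
    have h1 := lipcos.dist_le_mul (2*x) (2*x')
    have h2 : dist (2*x) (2*x') = 2 * dist x x' := by
      rw [Real.dist_eq, Real.dist_eq, show (2*x) - (2*x') = 2*(x-x') by ring, abs_mul]
      norm_num
    rw [h2] at h1
    simpa using h1
  rw [g_eq, g_eq, Real.dist_eq, Real.dist_eq] at *
  have key : (1 + μ - q y)/2 * (1 + Real.cos (2*x)) - 1 -
      ((1 + μ - q y)/2 * (1 + Real.cos (2*x')) - 1)
      = (1 + μ - q y)/2 * (Real.cos (2*x) - Real.cos (2*x')) := by ring
  rw [key, abs_mul]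
  have h8 : |(1 + μ - q y)/2| ≤ (1 + |μ| + Q)/2 := by
    rw [abs_div, abs_two]
    have : |1 + μ - q y| ≤ 1 + |μ| + Q := by
      rw [abs_le]
      constructor <;> nlinarith [h4.1, h4.2, h7.1, h7.2]
    linarith
  calc |(1 + μ - q y)/2| * |Real.cos (2*x) - Real.cos (2*x')|
      ≤ (1 + |μ| + Q)/2 * (2 * |x - x'|) := by
        apply mul_le_mul h8 hcos (abs_nonneg _) (by positivity)
    _ = (1 + |μ| + Q) * |x - x'| := by ring

lemma lipschitzWith_g {q : ℝ → ℝ} {Q : ℝ} (hQ : ∀ y, |q y| ≤ Q) (μ y : ℝ) :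
    LipschitzWith (Real.toNNReal (1 + |μ| + Q)) (g q μ y) := by
  apply LipschitzWith.of_dist_le_mul
  intro x x'
  have hQ0 : 0 ≤ Q := (abs_nonneg _).trans (hQ y)
  rw [Real.coe_toNNReal _ (by positivity)]
  exact dist_g_le hQ μ y x x'

/-- A solution of the Prüfer ODE on `[-R, R]` with initial value `x₀` at `-R`. -/
def IsSol (q : ℝ → ℝ) (μ R x₀ : ℝ) (θ : ℝ → ℝ) : Prop :=
  θ (-R) = x₀ ∧ ∀ y ∈ Icc (-R) R, HasDerivWithinAt θ (g q μ y (θ y)) (Icc (-R) R) y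

lemma IsSol.continuousOn {q : ℝ → ℝ} {μ R x₀ : ℝ} {θ : ℝ → ℝ} (h : IsSol q μ R x₀ θ) :
    ContinuousOn θ (Icc (-R) R) := fun y hy => (h.2 y hy).continuousWithinAt

lemma Q_nonneg {q : ℝ → ℝ} {Q : ℝ} (hQ : ∀ y, |q y| ≤ Q) : 0 ≤ Q :=
  (abs_nonneg _).trans (hQ 0)

lemma exists_isSol {q : ℝ → ℝ} {Q R : ℝ} (hq : Continuous q) (hQ : ∀ y, |q y| ≤ Q)
    (hR : 0 < R) (μ x₀ : ℝ) : ∃ θ : ℝ → ℝ, IsSol q μ R x₀ θ := by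
  have hQ0 : 0 ≤ Q := Q_nonneg hQ
  set C : ℝ := 1 + |μ| + Q with hC
  have hC0 : 0 < C := by positivity
  have hpl : IsPicardLindelof (g q μ) (tmin := -R) (tmax := R) ⟨-R, left_mem_Icc.mpr (by linarith)⟩ x₀
      (Real.toNNReal (C * (2*R))) 0 (Real.toNNReal C) (Real.toNNReal C) := by
    refine ⟨fun t _ => (lipschitzWith_g hQ μ t).lipschitzOnWith, fun x _ => ?_, fun t _ x _ => ?_, ?_⟩
    · apply Continuous.continuousOn
      unfold g
      exact (continuous_const.add (((continuous_const.sub hq)).mul continuous_const))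
    · rw [Real.norm_eq_abs, Real.coe_toNNReal _ hC0.le]; exact abs_g_le hQ μ t x
    · rw [Real.coe_toNNReal _ hC0.le, Real.coe_toNNReal _ (by positivity), NNReal.coe_zero, sub_zero]
      have hmax : max (R - (-R)) ((-R) - (-R)) = 2*R := by
        rw [max_eq_left (by linarith)]; ring
      rw [hmax]
  obtain ⟨θ, h0, hode⟩ := hpl.exists_eq_forall_mem_Icc_hasDerivWithinAt₀
  exact ⟨θ, h0, hode⟩

lemma isSol_unique {q : ℝ → ℝ} {Q R : ℝ} (hQ : ∀ y, |q y| ≤ Q) {μ x₀ : ℝ} {θ₁ θ₂ : ℝ → ℝ}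
    (h1 : IsSol q μ R x₀ θ₁) (h2 : IsSol q μ R x₀ θ₂) :
    EqOn θ₁ θ₂ (Icc (-R) R) := by
  apply ODE_solution_unique_of_mem_Icc_right
    (v := g q μ) (s := fun _ => univ) (K := Real.toNNReal (1 + |μ| + Q))
    (fun t _ => (lipschitzWith_g hQ μ t).lipschitzOnWith)
    h1.continuousOn
    (fun t ht => hasDerivWithinAt_Ici_of_Icc ht (h1.2 t (Ico_subset_Icc_self ht)))
    (fun t _ => mem_univ _)
    h2.continuousOn
    (fun t ht => hasDerivWithinAt_Ici_of_Icc ht (h2.2 t (Ico_subset_Icc_self ht)))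
    (fun t _ => mem_univ _)
  rw [h1.1, h2.1]

/-- The Prüfer angle stays below `π/2`. -/
lemma isSol_lt_pi_div_two {q : ℝ → ℝ} {μ R x₀ : ℝ} {θ : ℝ → ℝ}
    (h : IsSol q μ R x₀ θ) (hx₀ : x₀ < π/2) :
    ∀ y ∈ Icc (-R) R, θ y < π/2 := by
  have key := neg_on_Icc_of_deriv_neg (w := fun y => θ y - π/2)
    (d := fun y => g q μ y (θ y)) (a := -R) (b := R)
    (fun y hy => (h.2 y hy).sub_const _) (by simpa [h.1] using hx₀) ?_
  · intro y hy; have := key y hy; linarith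
  · intro y _ hy0
    have hθ : θ y = π/2 := by linarith
    simp [g, hθ, Real.sin_pi_div_two, Real.cos_pi_div_two]

/-- For `μ > Q` the Prüfer angle stays positive. -/
lemma isSol_pos {q : ℝ → ℝ} {Q : ℝ} (hQ : ∀ y, |q y| ≤ Q) {μ R x₀ : ℝ} {θ : ℝ → ℝ}
    (h : IsSol q μ R x₀ θ) (hx₀ : 0 < x₀) (hμ : Q < μ) :
    ∀ y ∈ Icc (-R) R, 0 < θ y := by
  have key := neg_on_Icc_of_deriv_neg (w := fun y => -θ y)
    (d := fun y => -g q μ y (θ y)) (a := -R) (b := R)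
    (fun y hy => (h.2 y hy).neg) (by simpa [h.1] using hx₀) ?_
  · intro y hy; have := key y hy; linarith
  · intro y _ hy0
    have hθ : θ y = 0 := by linarith
    have := (abs_le.mp (hQ y)).2
    simp only [g, hθ, Real.sin_zero, Real.cos_zero]
    norm_num
    linarith

/-- Weak comparison: solutions are monotone in `(μ, x₀)`. -/
lemma isSol_le_isSol {q : ℝ → ℝ} {Q R : ℝ} (hQ : ∀ y, |q y| ≤ Q) (hR : 0 < R)
    {μ ν x₀ x₁ : ℝ} {θ₁ θ₂ : ℝ → ℝ}
    (h1 : IsSol q μ R x₀ θ₁) (h2 : IsSol q ν R x₁ θ₂) (hμν : μ ≤ ν) (hx : x₀ ≤ x₁) :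
    ∀ y ∈ Icc (-R) R, θ₁ y ≤ θ₂ y := by
  have hQ0 : 0 ≤ Q := Q_nonneg hQ
  set K : ℝ := 1 + |μ| + Q with hK
  have hK0 : 0 < K := by positivity
  have main : ∀ ε > 0, ∀ y ∈ Icc (-R) R, θ₁ y - θ₂ y < ε * Real.exp (2*K*(y+R)) := by
    intro ε hε
    have key := neg_on_Icc_of_deriv_neg
      (w := fun y => θ₁ y - θ₂ y - ε * Real.exp (2*K*(y+R)))
      (d := fun y => g q μ y (θ₁ y) - g q ν y (θ₂ y) - ε * (Real.exp (2*K*(y+R)) * (2*K)))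
      (a := -R) (b := R) ?_ ?_ ?_
    · intro y hy; have := key y hy; linarith
    · intro y hy
      refine ((h1.2 y hy).sub (h2.2 y hy)).sub ?_
      apply HasDerivWithinAt.const_mul
      have : HasDerivAt (fun y => Real.exp (2*K*(y+R))) (Real.exp (2*K*(y+R)) * (2*K)) y := by
        have h' : HasDerivAt (fun y : ℝ => 2*K*(y+R)) (2*K) y := by
          simpa using (((hasDerivAt_id y).add_const R).const_mul (2*K))
        exact h'.exp
      exact this.hasDerivWithinAt
    · simp only [h1.1, h2.1]
      have : Real.exp (2*K*((-R)+R)) = 1 := by norm_num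
      rw [this]; linarith
    · intro y hy hy0
      set E : ℝ := ε * Real.exp (2*K*(y+R)) with hE
      have hEpos : 0 < E := by positivity
      have hθ1 : θ₁ y = θ₂ y + E := by rw [hE]; linarith
      have hlip : |g q μ y (θ₂ y + E) - g q μ y (θ₂ y)| ≤ K * E := by
        have := dist_g_le hQ μ y (θ₂ y + E) (θ₂ y)
        rw [Real.dist_eq, Real.dist_eq] at this
        simpa [abs_of_pos hEpos] using this
      have hcmp : g q μ y (θ₂ y) - g q ν y (θ₂ y) = (μ - ν) * (Real.cos (θ₂ y))^2 := by
        simp [g]; ring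
      have hcmp' : g q μ y (θ₂ y) - g q ν y (θ₂ y) ≤ 0 := by
        rw [hcmp]
        apply mul_nonpos_of_nonpos_of_nonneg (by linarith) (sq_nonneg _)
      have habs := (abs_le.mp hlip).2
      rw [hθ1]
      have : ε * (Real.exp (2*K*(y+R)) * (2*K)) = 2 * K * E := by rw [hE]; ring
      rw [this]
      nlinarith
  intro y hy
  by_contra hcon
  push_neg at hcon
  set δ := θ₁ y - θ₂ y with hδ
  have hδpos : 0 < δ := by linarith
  set Ey := Real.exp (2*K*(y+R)) with hEy
  have hEpos : 0 < Ey := Real.exp_pos _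
  have := main (δ / (2 * Ey)) (by positivity) y hy
  rw [← hEy] at this
  have h2' : δ / (2 * Ey) * Ey = δ/2 := by field_simp
  rw [← hδ] at this
  rw [h2'] at this
  linarith

/-- Strict comparison at the right endpoint. -/
lemma isSol_lt_at_right {q : ℝ → ℝ} {Q R : ℝ} (hQ : ∀ y, |q y| ≤ Q) (hR : 0 < R)
    {μ ν x₀ x₁ : ℝ} {θ₁ θ₂ : ℝ → ℝ}
    (h1 : IsSol q μ R x₀ θ₁) (h2 : IsSol q ν R x₁ θ₂) (hμν : μ ≤ ν) (hx : x₀ < x₁) :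
    θ₁ R < θ₂ R := by
  have hQ0 : 0 ≤ Q := Q_nonneg hQ
  have hle := isSol_le_isSol hQ hR h1 h2 hμν hx.le
  set K : ℝ := 1 + |ν| + Q with hK
  have hK0 : 0 < K := by positivity
  set u : ℝ → ℝ := fun y => Real.exp (K*y) * (θ₂ y - θ₁ y) with hu
  have hexp : ∀ y : ℝ, HasDerivAt (fun y => Real.exp (K*y)) (Real.exp (K*y) * K) y := by
    intro y
    have h' : HasDerivAt (fun y : ℝ => K*y) K y := by simpa using (hasDerivAt_id y).const_mul K
    exact h'.exp
  have huder : ∀ y ∈ Icc (-R) R, HasDerivWithinAt u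
      (Real.exp (K*y) * K * (θ₂ y - θ₁ y) +
        Real.exp (K*y) * (g q ν y (θ₂ y) - g q μ y (θ₁ y))) (Icc (-R) R) y := by
    intro y hy
    exact ((hexp y).hasDerivWithinAt).mul ((h2.2 y hy).sub (h1.2 y hy))
  have hucont : ContinuousOn u (Icc (-R) R) := fun y hy => (huder y hy).continuousWithinAt
  have humono : MonotoneOn u (Icc (-R) R) := by
    apply monotoneOn_of_deriv_nonneg (convex_Icc _ _) hucont
    · intro y hy
      rw [interior_Icc] at hy
      exact ((huder y (Ioo_subset_Icc_self hy)).hasDerivAt (Icc_mem_nhds hy.1 hy.2)).differentiableAt.differentiableWithinAt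
    · intro y hy
      rw [interior_Icc] at hy
      have hy' := Ioo_subset_Icc_self hy
      have hda := (huder y hy').hasDerivAt (Icc_mem_nhds hy.1 hy.2)
      rw [hda.deriv]
      have hΔ : 0 ≤ θ₂ y - θ₁ y := by have := hle y hy'; linarith
      have hlip : |g q ν y (θ₂ y) - g q ν y (θ₁ y)| ≤ K * (θ₂ y - θ₁ y) := by
        have := dist_g_le hQ ν y (θ₂ y) (θ₁ y)
        rw [Real.dist_eq, Real.dist_eq, abs_of_nonneg hΔ] at this
        exact this
      have hlow := (abs_le.mp hlip).1
      have hcmp : g q ν y (θ₁ y) - g q μ y (θ₁ y) = (ν - μ) * (Real.cos (θ₁ y))^2 := by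
        simp [g]; ring
      have hcmp' : 0 ≤ g q ν y (θ₁ y) - g q μ y (θ₁ y) := by
        rw [hcmp]; apply mul_nonneg (by linarith) (sq_nonneg _)
      have hexppos : 0 < Real.exp (K*y) := Real.exp_pos _
      nlinarith
  have h₁ := humono (left_mem_Icc.mpr (by linarith)) (right_mem_Icc.mpr (by linarith)) (by linarith)
  have hL : u (-R) = Real.exp (K*(-R)) * (x₁ - x₀) := by rw [hu]; simp [h1.1, h2.1]
  have hLpos : 0 < u (-R) := by
    rw [hL]; exact mul_pos (Real.exp_pos _) (by linarith)
  have hR' : u R = Real.exp (K*R) * (θ₂ R - θ₁ R) := rfl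
  rw [hR'] at h₁
  nlinarith [Real.exp_pos (K*R), hLpos]

/-- Grönwall estimate between two solutions. -/
lemma isSol_dist_le {q : ℝ → ℝ} {Q R : ℝ} (hQ : ∀ y, |q y| ≤ Q) (hR : 0 < R)
    {μ ν x₀ x₁ : ℝ} {θ₁ θ₂ : ℝ → ℝ}
    (h1 : IsSol q μ R x₀ θ₁) (h2 : IsSol q ν R x₁ θ₂) :
    dist (θ₂ R) (θ₁ R) ≤ gronwallBound (dist x₁ x₀) (1 + |μ| + Q) |ν - μ| (2*R) := by
  have hQ0 : 0 ≤ Q := Q_nonneg hQ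
  have hgb : ∀ t ∈ Ico (-R) R, dist (g q ν t (θ₂ t)) (g q μ t (θ₂ t)) ≤ |ν - μ| := by
    intro t _
    rw [Real.dist_eq]
    have hd : g q ν t (θ₂ t) - g q μ t (θ₂ t) = (ν - μ) * (Real.cos (θ₂ t))^2 := by
      simp [g]; ring
    rw [hd, abs_mul]
    have h1' : |(Real.cos (θ₂ t))^2| ≤ 1 := by
      rw [abs_of_nonneg (sq_nonneg _)]; exact Real.cos_sq_le_one _
    calc |ν - μ| * |(Real.cos (θ₂ t))^2| ≤ |ν - μ| * 1 :=
          mul_le_mul_of_nonneg_left h1' (abs_nonneg _)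
      _ = |ν - μ| := mul_one _
  have ha : dist (θ₁ (-R)) (θ₂ (-R)) ≤ dist x₁ x₀ := by
    rw [h1.1, h2.1, dist_comm]
  have key := dist_le_of_approx_trajectories_ODE (v := g q μ)
    (K := Real.toNNReal (1 + |μ| + Q))
    (f' := fun t => g q μ t (θ₁ t)) (g' := fun t => g q ν t (θ₂ t))
    (εf := 0) (εg := |ν - μ|) (δ := dist x₁ x₀)
    (fun t => lipschitzWith_g hQ μ t)
    h1.continuousOn
    (fun t ht => hasDerivWithinAt_Ici_of_Icc ht (h1.2 t (Ico_subset_Icc_self ht)))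
    (fun t _ => by simp)
    h2.continuousOn
    (fun t ht => hasDerivWithinAt_Ici_of_Icc ht (h2.2 t (Ico_subset_Icc_self ht)))
    hgb ha R (right_mem_Icc.mpr (by linarith))
  rw [Real.coe_toNNReal _ (by positivity), zero_add] at key
  have h2R : R - (-R) = 2*R := by ring
  rw [h2R] at key
  rwa [dist_comm]

/-- Two functions continuous on `[a,b]` that agree on `(a,b)` agree on `[a,b]`. -/
lemma eqOn_Icc_of_Ioo {a b : ℝ} (hab : a < b) {f g : ℝ → ℝ}
    (hf : ContinuousOn f (Icc a b)) (hg : ContinuousOn g (Icc a b))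
    (h : EqOn f g (Ioo a b)) : EqOn f g (Icc a b) := by
  have hclo : ∀ x ∈ Icc a b, x ∈ closure (Ioo a b) := by
    intro x hx; rw [closure_Ioo hab.ne]; exact hx
  intro x hx
  have hne : (𝓝[Ioo a b] x).NeBot := mem_closure_iff_nhdsWithin_neBot.mp (hclo x hx)
  have hft : Tendsto f (𝓝[Ioo a b] x) (𝓝 (f x)) := (hf x hx).mono Ioo_subset_Icc_self
  have hgt : Tendsto g (𝓝[Ioo a b] x) (𝓝 (g x)) := (hg x hx).mono Ioo_subset_Icc_self
  have hfg : Tendsto f (𝓝[Ioo a b] x) (𝓝 (g x)) := by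
    refine hgt.congr' ?_
    filter_upwards [eventually_mem_nhdsWithin] with y hy using (h hy).symm
  exact tendsto_nhds_unique hft hfg

/-- The Prüfer radial representation: `r cos θ` and `r sin θ` solve the linear system. -/
lemma pruefer_rep {q : ℝ → ℝ} {μ R x₀ : ℝ} (hq : Continuous q) {θ : ℝ → ℝ} (hθc : Continuous θ)
    (hsol : IsSol q μ R x₀ θ) :
    ∃ r : ℝ → ℝ, Continuous r ∧ (∀ y, 0 < r y) ∧ r (-R) = 1 ∧
      (∀ y ∈ Icc (-R) R, HasDerivWithinAt (fun z => r z * Real.cos (θ z))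
        (r y * Real.sin (θ y)) (Icc (-R) R) y) ∧
      (∀ y ∈ Icc (-R) R, HasDerivWithinAt (fun z => r z * Real.sin (θ z))
        ((μ - q y) * (r y * Real.cos (θ y))) (Icc (-R) R) y) := by
  set w : ℝ → ℝ := fun z => (μ - q z + 1) * (Real.sin (θ z) * Real.cos (θ z)) with hw
  have hwc : Continuous w := ((continuous_const.sub hq).add continuous_const).mul
    ((Real.continuous_sin.comp hθc).mul (Real.continuous_cos.comp hθc))
  set W : ℝ → ℝ := fun z => ∫ t in (-R)..z, w t with hWdef
  have hW : ∀ y, HasDerivAt W (w y) y := fun y =>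
    intervalIntegral.integral_hasDerivAt_right (hwc.intervalIntegrable _ _)
      (hwc.stronglyMeasurable.stronglyMeasurableAtFilter) hwc.continuousAt
  have hWc : Continuous W := by
    rw [continuous_iff_continuousAt]; exact fun y => (hW y).continuousAt
  refine ⟨fun z => Real.exp (W z), Real.continuous_exp.comp hWc, fun y => Real.exp_pos _, ?_, ?_, ?_⟩
  · simp only [hWdef, intervalIntegral.integral_same, Real.exp_zero]
  · intro y hy
    have hr : HasDerivAt (fun z => Real.exp (W z)) (Real.exp (W y) * w y) y := (hW y).exp
    have hcosd : HasDerivWithinAt (fun z => Real.cos (θ z))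
        (-Real.sin (θ y) * (g q μ y (θ y))) (Icc (-R) R) y := (hsol.2 y hy).cos
    have hmul := (hr.hasDerivWithinAt).mul hcosd
    refine hmul.congr_deriv (Eq.symm ?_)
    have pyth := Real.sin_sq_add_cos_sq (θ y)
    simp only [hw, g]
    linear_combination (-(Real.exp (W y) * Real.sin (θ y))) * pyth
  · intro y hy
    have hr : HasDerivAt (fun z => Real.exp (W z)) (Real.exp (W y) * w y) y := (hW y).exp
    have hsind : HasDerivWithinAt (fun z => Real.sin (θ z))
        (Real.cos (θ y) * (g q μ y (θ y))) (Icc (-R) R) y := (hsol.2 y hy).sin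
    have hmul := (hr.hasDerivWithinAt).mul hsind
    refine hmul.congr_deriv (Eq.symm ?_)
    have pyth := Real.sin_sq_add_cos_sq (θ y)
    simp only [hw, g]
    linear_combination (-((μ - q y) * (Real.exp (W y) * Real.cos (θ y)))) * pyth

/-- Uniqueness for the linear second-order system. -/
lemma linear_system_unique {q : ℝ → ℝ} {Q R μ : ℝ} (hQ : ∀ y, |q y| ≤ Q)
    {P₁ P₂ : ℝ → ℝ × ℝ}
    (h1c : ContinuousOn P₁ (Icc (-R) R))
    (h1 : ∀ t ∈ Ico (-R) R, HasDerivWithinAt P₁ ((P₁ t).2, (μ - q t) * (P₁ t).1) (Ici t) t)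
    (h2c : ContinuousOn P₂ (Icc (-R) R))
    (h2 : ∀ t ∈ Ico (-R) R, HasDerivWithinAt P₂ ((P₂ t).2, (μ - q t) * (P₂ t).1) (Ici t) t)
    (h0 : P₁ (-R) = P₂ (-R)) : EqOn P₁ P₂ (Icc (-R) R) := by
  have hQ0 : 0 ≤ Q := Q_nonneg hQ
  set v : ℝ → ℝ × ℝ → ℝ × ℝ := fun t p => (p.2, (μ - q t) * p.1) with hv
  have hlip : ∀ t, LipschitzWith (Real.toNNReal (1 + |μ| + Q)) (v t) := by
    intro t
    apply LipschitzWith.of_dist_le_mul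
    intro p p'
    rw [Real.coe_toNNReal _ (by positivity), Prod.dist_eq, Prod.dist_eq]
    have hqb := abs_le.mp (hQ t)
    have h1' : dist p.2 p'.2 ≤ (1 + |μ| + Q) * max (dist p.1 p'.1) (dist p.2 p'.2) := by
      have := le_max_right (dist p.1 p'.1) (dist p.2 p'.2)
      nlinarith [dist_nonneg (x := p.1) (y := p'.1), dist_nonneg (x := p.2) (y := p'.2),
        abs_nonneg μ]
    have h2' : dist ((μ - q t) * p.1) ((μ - q t) * p'.1)
        ≤ (1 + |μ| + Q) * max (dist p.1 p'.1) (dist p.2 p'.2) := by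
      rw [Real.dist_eq, show (μ - q t) * p.1 - (μ - q t) * p'.1 = (μ - q t) * (p.1 - p'.1) by ring,
        abs_mul]
      have hm : |μ - q t| ≤ 1 + |μ| + Q := by
        rw [abs_le]; constructor <;> nlinarith [le_abs_self μ, neg_abs_le μ]
      have hle := le_max_left (dist p.1 p'.1) (dist p.2 p'.2)
      rw [Real.dist_eq] at hle ⊢
      nlinarith [abs_nonneg (p.1 - p'.1), abs_nonneg (μ - q t),
        le_max_left (|p.1 - p'.1|) (dist p.2 p'.2)]
    exact max_le h1' h2'
  exact ODE_solution_unique_of_mem_Icc_right (v := v) (s := fun _ => univ)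
    (fun t _ => (hlip t).lipschitzOnWith) h1c h1 (fun t _ => mem_univ _)
    h2c h2 (fun t _ => mem_univ _) h0

lemma sin_arctan_eq (s : ℝ) : Real.sin (Real.arctan s) = s * Real.cos (Real.arctan s) := by
  rw [Real.sin_arctan, Real.cos_arctan]
  ring

/-- Construction of an eigenfunction from an angle that hits the right boundary value. -/
lemma exists_eigenfunction {q : ℝ → ℝ} {R μ s : ℝ} (hq : Continuous q)
    (hR : 0 < R) (hs : 0 < s) {θ : ℝ → ℝ} (hθc : Continuous θ)
    (hsol : IsSol q μ R (Real.arctan s) θ) {m : ℤ}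
    (hend : θ R = m * π + Real.arctan (-s)) :
    ∃ φ : ℝ → ℝ, ContDiffOn ℝ 2 φ (Icc (-R) R) ∧ φ (-R) ≠ 0 ∧
      (∀ y ∈ Icc (-R) R, derivWithin (derivWithin φ (Icc (-R) R)) (Icc (-R) R) y
          = (μ - q y) * φ y) ∧
      derivWithin φ (Icc (-R) R) (-R) = s * φ (-R) ∧
      derivWithin φ (Icc (-R) R) R = -s * φ R := by
  obtain ⟨r, hrc, hrpos, hr1, hφd, hψd⟩ := pruefer_rep hq hθc hsol
  set φ : ℝ → ℝ := fun z => r z * Real.cos (θ z) with hφdef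
  set ψ : ℝ → ℝ := fun z => r z * Real.sin (θ z) with hψdef
  have huniq : UniqueDiffOn ℝ (Icc (-R) R) := uniqueDiffOn_Icc (by linarith)
  have hmemL : (-R) ∈ Icc (-R) R := left_mem_Icc.mpr (by linarith)
  have hmemR : R ∈ Icc (-R) R := right_mem_Icc.mpr (by linarith)
  have hderiv : EqOn (derivWithin φ (Icc (-R) R)) ψ (Icc (-R) R) :=
    fun y hy => (hφd y hy).derivWithin (huniq y hy)
  have hψderiv : ∀ y ∈ Icc (-R) R, derivWithin ψ (Icc (-R) R) y = (μ - q y) * φ y :=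
    fun y hy => (hψd y hy).derivWithin (huniq y hy)
  have hsecond : ∀ y ∈ Icc (-R) R,
      derivWithin (derivWithin φ (Icc (-R) R)) (Icc (-R) R) y = (μ - q y) * φ y := by
    intro y hy
    rw [derivWithin_congr hderiv (hderiv hy)]
    exact hψderiv y hy
  have hφc : Continuous φ := hrc.mul (Real.continuous_cos.comp hθc)
  have hC2 : ContDiffOn ℝ 2 φ (Icc (-R) R) := by
    have h2eq : (2 : WithTop ℕ∞) = (1 : WithTop ℕ∞) + 1 := by norm_num
    rw [h2eq, contDiffOn_succ_iff_derivWithin huniq]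
    refine ⟨fun y hy => (hφd y hy).differentiableWithinAt, by simp, ?_⟩
    apply ContDiffOn.congr (f := ψ) ?_ hderiv
    have h1eq : (1 : WithTop ℕ∞) = (0 : WithTop ℕ∞) + 1 := by norm_num
    rw [h1eq, contDiffOn_succ_iff_derivWithin huniq]
    refine ⟨fun y hy => (hψd y hy).differentiableWithinAt, by simp, ?_⟩
    apply ContDiffOn.congr (f := fun y => (μ - q y) * φ y) ?_ (fun y hy => hψderiv y hy)
    rw [contDiffOn_zero]
    exact ((continuous_const.sub hq).mul hφc).continuousOn
  have hbcl : derivWithin φ (Icc (-R) R) (-R) = s * φ (-R) := by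
    rw [hderiv hmemL, hψdef, hφdef]
    simp only [hsol.1]
    rw [sin_arctan_eq s]
    ring
  have hbcr : derivWithin φ (Icc (-R) R) R = -s * φ R := by
    rw [hderiv hmemR, hψdef, hφdef]
    have hsin : Real.sin (θ R) = Real.cos (m * π) * Real.sin (Real.arctan (-s)) := by
      rw [hend, Real.sin_add, Real.sin_int_mul_pi]
      ring
    have hcos : Real.cos (θ R) = Real.cos (m * π) * Real.cos (Real.arctan (-s)) := by
      rw [hend, Real.cos_add, Real.sin_int_mul_pi]
      ring
    simp only
    rw [hsin, hcos, sin_arctan_eq (-s)]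
    ring
  have hφ0 : φ (-R) ≠ 0 := by
    rw [hφdef]
    simp only [hsol.1, hr1]
    rw [one_mul]
    exact (Real.cos_arctan_pos s).ne'
  exact ⟨φ, hC2, hφ0, hsecond, hbcl, hbcr⟩

/-- From an eigenfunction to the boundary value of the Prüfer angle. -/
lemma eigenfunction_to_angle {q : ℝ → ℝ} {Q R μ s : ℝ} (hq : Continuous q)
    (hQ : ∀ y, |q y| ≤ Q) (hR : 0 < R) (hs : 0 < s) {θ : ℝ → ℝ} (hθc : Continuous θ)
    (hsol : IsSol q μ R (Real.arctan s) θ)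
    {φ : ℝ → ℝ} (hφ2 : ContDiffOn ℝ 2 φ (Icc (-R) R))
    (hne : ∃ y ∈ Icc (-R) R, φ y ≠ 0)
    (hode : ∀ y ∈ Ioo (-R) R, derivWithin (derivWithin φ (Icc (-R) R)) (Icc (-R) R) y
        = (μ - q y) * φ y)
    (hbc1 : derivWithin φ (Icc (-R) R) (-R) = s * φ (-R))
    (hbc2 : derivWithin φ (Icc (-R) R) R = -s * φ R) :
    ∃ m : ℤ, θ R = m * π + Real.arctan (-s) := by
  have hRR : (-R) < R := by linarith
  have huniq : UniqueDiffOn ℝ (Icc (-R) R) := uniqueDiffOn_Icc hRR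
  have hmemL : (-R) ∈ Icc (-R) R := left_mem_Icc.mpr hRR.le
  have hmemR : R ∈ Icc (-R) R := right_mem_Icc.mpr hRR.le
  set φ' : ℝ → ℝ := derivWithin φ (Icc (-R) R) with hφ'def
  set φ'' : ℝ → ℝ := derivWithin φ' (Icc (-R) R) with hφ''def
  have hdiff1 : DifferentiableOn ℝ φ (Icc (-R) R) := hφ2.differentiableOn (by norm_num)
  have hd1 : ∀ y ∈ Icc (-R) R, HasDerivWithinAt φ (φ' y) (Icc (-R) R) y :=
    fun y hy => (hdiff1 y hy).hasDerivWithinAt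
  have hC1 : ContDiffOn ℝ 1 φ' (Icc (-R) R) := ContDiffOn.derivWithin (m := 1) hφ2 huniq (by norm_num)
  have hd2 : ∀ y ∈ Icc (-R) R, HasDerivWithinAt φ' (φ'' y) (Icc (-R) R) y :=
    fun y hy => ((hC1.differentiableOn one_ne_zero) y hy).hasDerivWithinAt
  have hφcont : ContinuousOn φ (Icc (-R) R) := hφ2.continuousOn
  have hφ'cont : ContinuousOn φ' (Icc (-R) R) := hC1.continuousOn
  have hφ''cont : ContinuousOn φ'' (Icc (-R) R) := (ContDiffOn.derivWithin (m := 0) hC1 huniq (by norm_num)).continuousOn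
  have heqIcc : ∀ y ∈ Icc (-R) R, φ'' y = (μ - q y) * φ y := by
    apply eqOn_Icc_of_Ioo hRR hφ''cont
    · exact (continuous_const.sub hq).continuousOn.mul hφcont
    · exact fun y hy => hode y hy
  -- the eigenfunction does not vanish at the left endpoint
  have hφ0 : φ (-R) ≠ 0 := by
    intro h0
    have hφ'0 : φ' (-R) = 0 := by rw [hbc1, h0, mul_zero]
    have key := linear_system_unique (R := R) (μ := μ) hQ
      (P₁ := fun y => (φ y, φ' y)) (P₂ := fun _ => ((0:ℝ), (0:ℝ)))
      (hφcont.prodMk hφ'cont) ?_ continuousOn_const ?_ (by simp [h0, hφ'0])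
    · obtain ⟨y, hy, hyne⟩ := hne
      have := key hy
      simp only [Prod.mk.injEq] at this
      exact hyne this.1
    · intro t ht
      have hder := (hd1 t (Ico_subset_Icc_self ht)).prodMk (hd2 t (Ico_subset_Icc_self ht))
      have hder' := hasDerivWithinAt_Ici_of_Icc ht hder
      have : φ'' t = (μ - q t) * φ t := heqIcc t (Ico_subset_Icc_self ht)
      rw [this] at hder'
      exact hder'
    · intro t _
      have : ((0:ℝ), (μ - q t) * (0:ℝ)) = ((0:ℝ), (0:ℝ)) := by simp
      rw [show ((((0:ℝ),(0:ℝ)) : ℝ × ℝ).2, (μ - q t) * ((((0:ℝ),(0:ℝ)) : ℝ × ℝ)).1) = ((0:ℝ),(0:ℝ)) by simp]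
      exact hasDerivWithinAt_const _ _ _
  -- Prüfer representation of the eigenfunction
  obtain ⟨r, hrc, hrpos, hr1, hφd, hψd⟩ := pruefer_rep hq hθc hsol
  set c : ℝ := φ (-R) / Real.cos (Real.arctan s) with hcdef
  have hc0 : c ≠ 0 := div_ne_zero hφ0 (Real.cos_arctan_pos s).ne'
  have hcc : c * Real.cos (Real.arctan s) = φ (-R) := by
    rw [hcdef]; exact div_mul_cancel₀ _ (Real.cos_arctan_pos s).ne'
  have key := linear_system_unique (R := R) (μ := μ) hQ
    (P₁ := fun y => (φ y, φ' y))
    (P₂ := fun y => (c * (r y * Real.cos (θ y)), c * (r y * Real.sin (θ y))))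
    (hφcont.prodMk hφ'cont) ?_
    (((continuous_const.mul (hrc.mul (Real.continuous_cos.comp hθc))).prodMk
      (continuous_const.mul (hrc.mul (Real.continuous_sin.comp hθc)))).continuousOn) ?_ ?_
  · -- conclude at the right endpoint
    have hkR := key hmemR
    simp only [Prod.mk.injEq] at hkR
    have hφR : φ R = c * (r R * Real.cos (θ R)) := hkR.1
    have hφ'R : φ' R = c * (r R * Real.sin (θ R)) := hkR.2
    have heq : c * (r R * Real.sin (θ R)) = -s * (c * (r R * Real.cos (θ R))) := by
      rw [← hφ'R, ← hφR]
      exact hbc2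
    have hcr : c * r R ≠ 0 := mul_ne_zero hc0 (hrpos R).ne'
    have hkey : Real.sin (θ R) = -s * Real.cos (θ R) := by
      have h1 : (c * r R) * Real.sin (θ R) = (c * r R) * (-s * Real.cos (θ R)) := by
        ring_nf
        ring_nf at heq
        linarith [heq]
      exact mul_left_cancel₀ hcr h1
    have hcosRne : Real.cos (θ R) ≠ 0 := by
      intro h
      have hsinR : Real.sin (θ R) = 0 := by rw [hkey, h, mul_zero]
      have := Real.sin_sq_add_cos_sq (θ R)
      rw [h, hsinR] at this
      norm_num at this
    have htan : Real.tan (θ R) = -s := by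
      rw [Real.tan_eq_sin_div_cos, hkey]
      field_simp
    -- normalize the angle into (-π/2, π/2)
    have hπ := Real.pi_pos
    set m : ℤ := ⌊θ R / π + 1/2⌋ with hmdef
    have h1 : (m:ℝ) ≤ θ R / π + 1/2 := Int.floor_le _
    have h2 : θ R / π + 1/2 < m + 1 := Int.lt_floor_add_one _
    set ψ₀ : ℝ := θ R - m * π with hψ₀def
    have hlow : -(π/2) ≤ ψ₀ := by
      rw [hψ₀def]
      have := mul_le_mul_of_nonneg_right h1 hπ.le
      rw [add_mul, div_mul_cancel₀ _ hπ.ne'] at this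
      linarith
    have hhigh : ψ₀ < π/2 := by
      rw [hψ₀def]
      have := mul_lt_mul_of_pos_right h2 hπ
      rw [add_mul, div_mul_cancel₀ _ hπ.ne'] at this
      linarith
    have hψ₀cos : Real.cos ψ₀ ≠ 0 := by
      rw [hψ₀def]
      have : Real.cos (θ R - m * π) = Real.cos (θ R) * Real.cos (m * π)
          + Real.sin (θ R) * Real.sin (m * π) := Real.cos_sub _ _
      rw [this, Real.sin_int_mul_pi, mul_zero, add_zero]
      apply mul_ne_zero hcosRne
      intro h
      have := Real.abs_cos_int_mul_pi m
      rw [h] at this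
      norm_num at this
    have hlow' : -(π/2) < ψ₀ := by
      rcases lt_or_eq_of_le hlow with h | h
      · exact h
      · exfalso
        apply hψ₀cos
        rw [← h, Real.cos_neg, Real.cos_pi_div_two]
    have htanψ : Real.tan ψ₀ = -s := by
      rw [hψ₀def]
      rw [Real.tan_periodic.sub_int_mul_eq m]
      exact htan
    have : Real.arctan (-s) = ψ₀ := by
      rw [← htanψ, Real.arctan_tan hlow' hhigh]
    refine ⟨m, ?_⟩
    rw [this, hψ₀def]
    ring
  · intro t ht
    have hder := (hd1 t (Ico_subset_Icc_self ht)).prodMk (hd2 t (Ico_subset_Icc_self ht))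
    have hder' := hasDerivWithinAt_Ici_of_Icc ht hder
    have : φ'' t = (μ - q t) * φ t := heqIcc t (Ico_subset_Icc_self ht)
    rw [this] at hder'
    exact hder'
  · intro t ht
    have hd := ((hφd t (Ico_subset_Icc_self ht)).const_mul c).prodMk
      ((hψd t (Ico_subset_Icc_self ht)).const_mul c)
    have hd' := hasDerivWithinAt_Ici_of_Icc ht hd
    refine hd'.congr_deriv (Prod.ext (by dsimp only) ?_)
    dsimp only
    ring
  · -- initial conditions match
    have hsin := sin_arctan_eq s
    simp only [Prod.mk.injEq, hsol.1, hr1, one_mul]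
    constructor
    · rw [← hcc]
    · rw [hbc1, hsin, ← hcc]
      ring

lemma exists_isSol_cont {q : ℝ → ℝ} {Q R : ℝ} (hq : Continuous q) (hQ : ∀ y, |q y| ≤ Q)
    (hR : 0 < R) (μ x₀ : ℝ) : ∃ θ : ℝ → ℝ, Continuous θ ∧ IsSol q μ R x₀ θ := by
  obtain ⟨θ, hθ⟩ := exists_isSol hq hQ hR μ x₀
  have hRR : -R ≤ R := by linarith
  have hval : ∀ z ∈ Icc (-R) R, θ (projIcc (-R) R hRR z : ℝ) = θ z := by
    intro z hz; rw [projIcc_of_mem hRR hz]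
  refine ⟨fun y => θ (projIcc (-R) R hRR y : ℝ), ?_, ?_, ?_⟩
  · exact hθ.continuousOn.comp_continuous
      (continuous_subtype_val.comp (continuous_projIcc)) (fun x => (projIcc (-R) R hRR x).2)
  · show θ (projIcc (-R) R hRR (-R) : ℝ) = x₀
    rw [hval (-R) (left_mem_Icc.mpr hRR), hθ.1]
  · intro y hy
    have hder := (hθ.2 y hy).congr (fun z hz => hval z hz) (hval y hy)
    rw [← hval y hy] at hder
    exact hder

/-- Continuity of the endpoint value of the Prüfer angle in the spectral parameter. -/
lemma theta_R_continuous {q : ℝ → ℝ} {Q R α : ℝ} (hq : Continuous q) (hQ : ∀ y, |q y| ≤ Q)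
    (hR : 0 < R) (hα : 0 < α) {Θ : ℝ → ℝ → ℝ}
    (hΘ : ∀ μ, IsSol q μ R (Real.arctan (Real.sqrt (μ + α))) (Θ μ)) (μ₀ : ℝ) :
    ContinuousAt (fun μ => Θ μ R) μ₀ := by
  have hQ0 : 0 ≤ Q := Q_nonneg hQ
  set K : ℝ := 1 + |μ₀| + Q with hK
  have hK0 : 0 < K := by positivity
  set x : ℝ → ℝ := fun μ => Real.arctan (Real.sqrt (μ + α)) with hx
  have hxc : Continuous x :=
    Real.continuous_arctan.comp (Real.continuous_sqrt.comp (continuous_id.add continuous_const))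
  set B : ℝ → ℝ := fun ν => gronwallBound (dist (x ν) (x μ₀)) K |ν - μ₀| (2*R) with hB
  have hbound : ∀ ν, dist (Θ ν R) (Θ μ₀ R) ≤ B ν := fun ν =>
    isSol_dist_le hQ hR (hΘ μ₀) (hΘ ν)
  have hBeq : ∀ ν, B ν = dist (x ν) (x μ₀) * Real.exp (K * (2*R))
      + |ν - μ₀| / K * (Real.exp (K * (2*R)) - 1) := by
    intro ν
    rw [hB]
    simp only [gronwallBound_of_K_ne_0 hK0.ne']
  have hB0 : Tendsto B (𝓝 μ₀) (𝓝 0) := by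
    have hc1 : Tendsto (fun ν => dist (x ν) (x μ₀)) (𝓝 μ₀) (𝓝 0) := by
      have := (hxc.tendsto μ₀).dist (tendsto_const_nhds (x := x μ₀) (f := 𝓝 μ₀))
      simpa using this
    have hc2 : Tendsto (fun ν => |ν - μ₀|) (𝓝 μ₀) (𝓝 0) := by
      have : Tendsto (fun ν : ℝ => ν - μ₀) (𝓝 μ₀) (𝓝 0) := by
        simpa using (continuous_sub_right μ₀).tendsto μ₀
      simpa using this.abs
    have := (hc1.mul_const (Real.exp (K * (2*R)))).add
      ((hc2.div_const K).mul_const (Real.exp (K * (2*R)) - 1))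
    simp only [zero_mul, zero_div, add_zero] at this
    refine Tendsto.congr (fun ν => (hBeq ν).symm) this
  rw [Metric.continuousAt_iff]
  intro ε hε
  have hev : ∀ᶠ ν in 𝓝 μ₀, B ν < ε := hB0.eventually (gt_mem_nhds hε)
  rw [Metric.eventually_nhds_iff] at hev
  obtain ⟨δ, hδ, hball⟩ := hev
  exact ⟨δ, hδ, fun {ν} hν => lt_of_le_of_lt (hbound ν) (hball hν)⟩

end SLCount

/-- Counting eigenvalues: `h(0) = θ₀(R) + arctan √α ∈ (-kπ, (1-k)π]` if and
only if the linearization at `V` has exactly `k` nonnegative eigenvalues. -/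
theorem count_nonnegative_eigenvalues (lam a α R : ℝ)
    (hlam : 0 < lam) (ha0 : 0 < a) (ha1 : a < 1/2) (hα : 0 < α) (hR : 0 < R)
    (V : ℝ → ℝ) (hV : IsProfile lam a α R V)
    (θ₀ : ℝ → ℝ) (hθ₀ : IsTheta lam a α R 0 V θ₀) (k : ℕ) :
    (θ₀ R + Real.arctan (Real.sqrt (0 + α)) ∈
        Set.Ioc (-(k : ℝ) * Real.pi) ((1 - (k : ℝ)) * Real.pi)) ↔
      ({μ : ℝ | 0 ≤ μ ∧ IsEigenvalue lam a α R V μ}.Finite ∧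
        {μ : ℝ | 0 ≤ μ ∧ IsEigenvalue lam a α R V μ}.ncard = k) := by
  classical
  have hπ := Real.pi_pos
  have hRR : -R < R := by linarith
  have hRR' : (-R : ℝ) ≤ R := hRR.le
  -- the potential `q`
  set fd : ℝ → ℝ := fun u => (lam * (u - a) + lam * u) * (1 - u) - lam * u * (u - a) with hfd_def
  have hfd : ∀ u : ℝ, HasDerivAt (f lam a) (fd u) u := by
    intro u
    have h1 : HasDerivAt (fun u : ℝ => lam * u) lam u := by
      simpa using (hasDerivAt_id u).const_mul lam
    have h2 : HasDerivAt (fun u : ℝ => u - a) 1 u := (hasDerivAt_id u).sub_const a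
    have h3 : HasDerivAt (fun u : ℝ => 1 - u) (-1) u := by
      simpa using (hasDerivAt_id u).const_sub 1
    have hmul := (h1.mul h2).mul h3
    have hfun : (f lam a) = fun u => ((lam * u) * (u - a)) * (1 - u) := rfl
    rw [hfun]
    refine hmul.congr_deriv ?_
    simp only [hfd_def, Pi.mul_apply]
    ring
  have hfdc : Continuous fd := by
    apply Continuous.sub
    · exact ((continuous_const.mul (continuous_id.sub continuous_const)).add
        (continuous_const.mul continuous_id)).mul (continuous_const.sub continuous_id)
    · exact (continuous_const.mul continuous_id).mul (continuous_id.sub continuous_const)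
  have hVc : ContinuousOn V (Set.Icc (-R) R) := hV.1.continuousOn
  set qI : ℝ → ℝ := fun y => fd (V y) with hqI_def
  have hqIc : ContinuousOn qI (Set.Icc (-R) R) := hfdc.comp_continuousOn hVc
  obtain ⟨Q, hQI⟩ := isCompact_Icc.exists_bound_of_continuousOn hqIc
  set qt : ℝ → ℝ := fun y => qI (Set.projIcc (-R) R hRR' y : ℝ) with hqt_def
  have hqtc : Continuous qt := hqIc.comp_continuous
    (continuous_subtype_val.comp continuous_projIcc) (fun x => (Set.projIcc (-R) R hRR' x).2)
  have hQ : ∀ y, |qt y| ≤ Q := fun y => by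
    have := hQI _ (Set.projIcc (-R) R hRR' y).2
    simpa [Real.norm_eq_abs] using this
  have hqt_eq : ∀ y ∈ Set.Icc (-R) R, qt y = deriv (f lam a) (V y) := by
    intro y hy
    rw [hqt_def]
    simp only
    rw [Set.projIcc_of_mem hRR' hy, hqI_def]
    exact ((hfd (V y)).deriv).symm
  -- the family of Prüfer angles
  have hfam : ∀ μ : ℝ, ∃ θ, Continuous θ ∧
      SLCount.IsSol qt μ R (Real.arctan (Real.sqrt (μ + α))) θ :=
    fun μ => SLCount.exists_isSol_cont hqtc hQ hR μ _
  choose Θ hΘc hΘ using hfam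
  set H : ℝ → ℝ := fun μ => Θ μ R + Real.arctan (Real.sqrt (μ + α)) with hH
  -- identification of `θ₀` with `Θ 0`
  have hθ₀sol : SLCount.IsSol qt 0 R (Real.arctan (Real.sqrt (0 + α))) θ₀ := by
    refine ⟨hθ₀.1, ?_⟩
    intro y hy
    have hder := hθ₀.2 y hy
    have : (-(Real.sin (θ₀ y))^2 + (0 - deriv (f lam a) (V y)) * (Real.cos (θ₀ y))^2)
        = SLCount.g qt 0 y (θ₀ y) := by
      rw [SLCount.g, hqt_eq y hy]
    rwa [this] at hder
  have hθ₀R : θ₀ R = Θ 0 R :=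
    (SLCount.isSol_unique hQ hθ₀sol (hΘ 0)) (Set.right_mem_Icc.mpr hRR')
  have hL : θ₀ R + Real.arctan (Real.sqrt (0 + α)) = H 0 := by rw [hθ₀R, hH]
  -- basic properties of H
  have hsq : ∀ μ : ℝ, 0 ≤ μ → 0 < Real.sqrt (μ + α) :=
    fun μ hμ => Real.sqrt_pos.mpr (by linarith)
  have hHlt : ∀ μ : ℝ, H μ < Real.pi := by
    intro μ
    have h1 := SLCount.isSol_lt_pi_div_two (hΘ μ)
      (Real.arctan_lt_pi_div_two _) R (Set.right_mem_Icc.mpr hRR')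
    have h2 := Real.arctan_lt_pi_div_two (Real.sqrt (μ + α))
    rw [hH]; dsimp only; linarith
  have hHmono : ∀ μ ν : ℝ, 0 ≤ μ → μ < ν → H μ < H ν := by
    intro μ ν hμ hμν
    have hsqlt : Real.sqrt (μ + α) < Real.sqrt (ν + α) :=
      Real.sqrt_lt_sqrt (by linarith) (by linarith)
    have harc : Real.arctan (Real.sqrt (μ+α)) < Real.arctan (Real.sqrt (ν+α)) :=
      Real.arctan_strictMono hsqlt
    have := SLCount.isSol_lt_at_right hQ hR (hΘ μ) (hΘ ν) hμν.le harc
    rw [hH]; dsimp only; linarith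
  have hHcont : ∀ μ₀ : ℝ, ContinuousAt H μ₀ := by
    intro μ₀
    apply ContinuousAt.add (SLCount.theta_R_continuous hqtc hQ hR hα hΘ μ₀)
    exact (Real.continuous_arctan.comp
      (Real.continuous_sqrt.comp (continuous_id.add continuous_const))).continuousAt
  have hQ0 : 0 ≤ Q := SLCount.Q_nonneg hQ
  have hHpos : 0 < H (Q + 1) := by
    have hxp : 0 < Real.arctan (Real.sqrt (Q + 1 + α)) := by
      have := Real.arctan_strictMono (hsq (Q+1) (by linarith))
      rwa [Real.arctan_zero] at this
    have := SLCount.isSol_pos hQ (hΘ (Q+1)) hxp (by linarith) R (Set.right_mem_Icc.mpr hRR')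
    rw [hH]; dsimp only; linarith
  -- eigenvalue characterization
  have hEig : ∀ μ : ℝ, 0 ≤ μ →
      (IsEigenvalue lam a α R V μ ↔ ∃ m : ℤ, H μ = m * Real.pi) := by
    intro μ hμ
    have hsμ : 0 < Real.sqrt (μ + α) := hsq μ hμ
    constructor
    · rintro ⟨φ, hφ2, hφne, hφode, hφbc1, hφbc2⟩
      have hode' : ∀ y ∈ Set.Ioo (-R) R,
          derivWithin (derivWithin φ (Set.Icc (-R) R)) (Set.Icc (-R) R) y
            = (μ - qt y) * φ y := by
        intro y hy
        have h1 := hφode y hy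
        have h2 := hqt_eq y (Set.Ioo_subset_Icc_self hy)
        have h3 : pd R (pd R φ) y
            = derivWithin (derivWithin φ (Set.Icc (-R) R)) (Set.Icc (-R) R) y := rfl
        rw [h3] at h1
        rw [h2]
        linarith
      obtain ⟨m, hm⟩ := SLCount.eigenfunction_to_angle hqtc hQ hR hsμ (hΘc μ) (hΘ μ)
        hφ2 hφne hode' hφbc1 hφbc2
      refine ⟨m, ?_⟩
      rw [hH]; dsimp only
      rw [hm, Real.arctan_neg]
      ring
    · rintro ⟨m, hm⟩
      have hend : Θ μ R = m * Real.pi + Real.arctan (-(Real.sqrt (μ + α))) := by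
        rw [Real.arctan_neg]
        rw [hH] at hm; dsimp only at hm
        linarith
      obtain ⟨φ, hC2, hφ0, hsecond, hbcl, hbcr⟩ :=
        SLCount.exists_eigenfunction hqtc hR hsμ (hΘc μ) (hΘ μ) hend
      refine ⟨φ, hC2, ⟨-R, Set.left_mem_Icc.mpr hRR', hφ0⟩, ?_, hbcl, hbcr⟩
      intro y hy
      have h1 := hsecond y (Set.Ioo_subset_Icc_self hy)
      have h2 := hqt_eq y (Set.Ioo_subset_Icc_self hy)
      have h3 : pd R (pd R φ) y
          = derivWithin (derivWithin φ (Set.Icc (-R) R)) (Set.Icc (-R) R) y := rfl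
      rw [h3, h1, ← h2]
      ring
  set E := {μ : ℝ | 0 ≤ μ ∧ IsEigenvalue lam a α R V μ} with hEdef
  have hEchar : ∀ μ : ℝ, μ ∈ E ↔ (0 ≤ μ ∧ ∃ m : ℤ, H μ = m * Real.pi) := fun μ =>
    ⟨fun h => ⟨h.1, (hEig μ h.1).mp h.2⟩, fun h => ⟨h.1, (hEig μ h.1).mpr h.2⟩⟩
  -- IVT selection of eigenvalues
  have hsel : ∀ m : ℤ, H 0 ≤ m * Real.pi → (m:ℝ) * Real.pi ≤ 0 →
      ∃ μ, 0 ≤ μ ∧ H μ = m * Real.pi := by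
    intro m h1 h2
    have hIcc : (m:ℝ) * Real.pi ∈ Set.Icc (H 0) (H (Q+1)) := ⟨h1, by linarith⟩
    have hsub := intermediate_value_Icc (by linarith : (0:ℝ) ≤ Q + 1)
      (fun x _ => (hHcont x).continuousWithinAt)
    obtain ⟨μ, hμIcc, hμeq⟩ := hsub hIcc
    exact ⟨μ, hμIcc.1, hμeq⟩
  have hHinj : ∀ μ ν : ℝ, 0 ≤ μ → 0 ≤ ν → H μ = H ν → μ = ν := by
    intro μ ν hμ hν hEq
    rcases lt_trichotomy μ ν with h | h | h
    · exact absurd hEq (ne_of_lt (hHmono μ ν hμ h))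
    · exact h
    · exact absurd hEq.symm (ne_of_lt (hHmono ν μ hν h))
  have hHmono' : ∀ μ : ℝ, 0 ≤ μ → H 0 ≤ H μ := by
    intro μ hμ
    rcases eq_or_lt_of_le hμ with h | h
    · rw [← h]
    · exact (hHmono 0 μ le_rfl h).le
  -- forward direction, for an arbitrary k
  have forward : ∀ k' : ℕ,
      (H 0 ∈ Set.Ioc (-(k':ℝ) * Real.pi) ((1 - (k':ℝ)) * Real.pi)) →
      E.Finite ∧ E.ncard = k' := by
    intro k hk
    set T : ℤ → ℝ := fun m =>
      if h : ∃ μ, 0 ≤ μ ∧ H μ = (m:ℝ) * Real.pi then h.choose else 0 with hT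
    have hTprop : ∀ m : ℤ, (∃ μ, 0 ≤ μ ∧ H μ = (m:ℝ) * Real.pi) →
        0 ≤ T m ∧ H (T m) = (m:ℝ) * Real.pi := by
      intro m h
      rw [hT]; simp only [dif_pos h]; exact h.choose_spec
    set S : Set ℤ := Set.Icc (1 - (k:ℤ)) 0 with hS
    have hPS : ∀ m ∈ S, ∃ μ, 0 ≤ μ ∧ H μ = (m:ℝ) * Real.pi := by
      intro m hm
      obtain ⟨hm1, hm2⟩ := hm
      apply hsel
      · have h1 : ((1:ℝ) - (k:ℝ)) ≤ (m:ℝ) := by exact_mod_cast hm1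
        have h2 := hk.2
        nlinarith
      · have h2 : (m:ℝ) ≤ 0 := by exact_mod_cast hm2
        exact mul_nonpos_of_nonpos_of_nonneg h2 hπ.le
    have hEeq : E = T '' S := by
      ext μ
      constructor
      · intro hμE
        rw [hEchar] at hμE
        obtain ⟨hμ0, m, hm⟩ := hμE
        have hmS : m ∈ S := by
          constructor
          · have hlow : -(k:ℝ) * Real.pi < (m:ℝ) * Real.pi := by
              rw [← hm]; exact lt_of_lt_of_le hk.1 (hHmono' μ hμ0)
            have h1 : -(k:ℝ) < (m:ℝ) := (mul_lt_mul_iff_of_pos_right hπ).mp hlow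
            have h2 : -(k:ℤ) < m := by exact_mod_cast h1
            omega
          · have hupper : (m:ℝ) * Real.pi < 1 * Real.pi := by
              rw [← hm, one_mul]; exact hHlt μ
            have h1 : (m:ℝ) < 1 := (mul_lt_mul_iff_of_pos_right hπ).mp hupper
            have h2 : m < 1 := by exact_mod_cast h1
            omega
        have hTm := hTprop m ⟨μ, hμ0, hm⟩
        exact ⟨m, hmS, hHinj _ _ hTm.1 hμ0 (by rw [hTm.2, hm])⟩
      · rintro ⟨m, hmS, rfl⟩
        have hTm := hTprop m (hPS m hmS)
        rw [hEchar]
        exact ⟨hTm.1, m, hTm.2⟩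
    have hinj : Set.InjOn T S := by
      intro m hm m' hm' hEq
      have h1 := hTprop m (hPS m hm)
      have h2 := hTprop m' (hPS m' hm')
      have h3 : (m:ℝ) * Real.pi = (m':ℝ) * Real.pi := by rw [← h1.2, ← h2.2, hEq]
      have h4 : (m:ℝ) = (m':ℝ) := mul_right_cancel₀ hπ.ne' h3
      exact_mod_cast h4
    have hfin : E.Finite := by rw [hEeq]; exact (Set.finite_Icc _ _).image T
    refine ⟨hfin, ?_⟩
    rw [hEeq, Set.ncard_image_of_injOn hinj, hS, ← Finset.coe_Icc, Set.ncard_coe_finset,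
      Int.card_Icc]
    omega
  constructor
  · intro hk
    rw [hL] at hk
    exact forward k hk
  · rintro ⟨hfin, hcard⟩
    set n : ℤ := ⌈H 0 / Real.pi⌉ with hn
    have hn1 : n ≤ 1 := by
      apply Int.ceil_le.mpr
      rw [Int.cast_one, div_le_one hπ]
      exact (hHlt 0).le
    set k' : ℕ := (1 - n).toNat with hk'
    have hk'eq : (k' : ℤ) = 1 - n := Int.toNat_of_nonneg (by omega)
    have hk'r : (k' : ℝ) = 1 - (n:ℝ) := by exact_mod_cast hk'eq
    have hc1 : H 0 ≤ (n:ℝ) * Real.pi := by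
      have h1 := Int.le_ceil (H 0 / Real.pi)
      rw [← hn] at h1
      calc H 0 = (H 0 / Real.pi) * Real.pi := by field_simp
        _ ≤ (n:ℝ) * Real.pi := mul_le_mul_of_nonneg_right h1 hπ.le
    have hc2 : ((n:ℝ) - 1) * Real.pi < H 0 := by
      have h1 := Int.ceil_lt_add_one (H 0 / Real.pi)
      rw [← hn] at h1
      have h2 : (n:ℝ) - 1 < H 0 / Real.pi := by linarith
      calc ((n:ℝ) - 1) * Real.pi < (H 0 / Real.pi) * Real.pi :=
            mul_lt_mul_of_pos_right h2 hπ
        _ = H 0 := by field_simp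
    have hmem : H 0 ∈ Set.Ioc (-(k':ℝ) * Real.pi) ((1 - (k':ℝ)) * Real.pi) := by
      constructor
      · rw [hk'r, show -(1 - (n:ℝ)) = (n:ℝ) - 1 by ring]
        exact hc2
      · rw [hk'r, show (1 - (1 - (n:ℝ))) = (n:ℝ) by ring]
        exact hc1
    have hres := forward k' hmem
    have hkk : k = k' := by rw [← hcard, hres.2]
    rw [hL, hkk]
    exact hmem
end

section
/- There exists a unique β∈(0,1) with F(β)=0; it satisfies a<β<1, F(u)<0 for all u∈(0,β) and F(u)>0 for all u∈(β,1]. Moreover, there exists u∈(0,β) with α·u²=−2F(u) if and only if α<a·λ. -/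
open Set MeasureTheory Filter

lemma F_eq (lam a u : ℝ) :
    F lam a u = lam * (-u^4/4 + (1+a)*u^3/3 - a*u^2/2) := by
  have h : ∀ x : ℝ, HasDerivAt (fun x : ℝ => lam * (-x^4/4 + (1+a)*x^3/3 - a*x^2/2))
      (f lam a x) x := by
    intro x
    have h4 := (hasDerivAt_pow 4 x).div_const 4
    have h3 := ((hasDerivAt_pow 3 x).const_mul ((1:ℝ)+a)).div_const 3
    have h2 := ((hasDerivAt_pow 2 x).const_mul a).div_const 2
    have := ((h4.neg.add h3).sub h2).const_mul lam
    convert this using 1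
    · rfl
    · rfl
    · ext y; simp only [Pi.add_apply, Pi.sub_apply, Pi.neg_apply]; ring
    · simp [f]; ring
  have hc : IntervalIntegrable (f lam a) MeasureTheory.volume 0 u := by
    apply Continuous.intervalIntegrable
    unfold f; continuity
  have := intervalIntegral.integral_eq_sub_of_hasDerivAt (fun x _ => h x) hc
  simp only [F, this]
  ring


set_option maxHeartbeats 1000000 in
/-- There is a unique zero `β ∈ (0,1)` of `F`; it satisfies `a < β < 1`,
`F < 0` on `(0,β)` and `F > 0` on `(β,1]`. Moreover there exists `u ∈ (0,β)`
with `α u² = -2 F(u)` if and only if `α < a λ`. -/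
theorem sign_of_F_and_intersection_criterion (lam a α : ℝ)
    (hlam : 0 < lam) (ha0 : 0 < a) (ha1 : a < 1/2) (hα : 0 < α) :
    ∃ β : ℝ, β ∈ Set.Ioo (0:ℝ) 1 ∧ F lam a β = 0 ∧
      (∀ β' ∈ Set.Ioo (0:ℝ) 1, F lam a β' = 0 → β' = β) ∧
      a < β ∧
      (∀ u ∈ Set.Ioo (0:ℝ) β, F lam a u < 0) ∧
      (∀ u ∈ Set.Ioc β (1:ℝ), 0 < F lam a u) ∧
      ((∃ u ∈ Set.Ioo (0:ℝ) β, α * u^2 = -2 * F lam a u) ↔ α < a * lam) := by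
  set s : ℝ := Real.sqrt (16*(1+a)^2 - 72*a) with hs_def
  have hdisc : 0 < 16*(1+a)^2 - 72*a := by nlinarith
  have hs2 : s^2 = 16*(1+a)^2 - 72*a := Real.sq_sqrt hdisc.le
  have hs0 : 0 < s := Real.sqrt_pos.2 hdisc
  set β : ℝ := (4*(1+a) - s)/6 with hβ_def
  set r2 : ℝ := (4*(1+a) + s)/6 with hr2_def
  -- basic inequalities
  have hslt : s < 4*(1+a) := by nlinarith [sq_nonneg (s - 4*(1+a))]
  have hβ0 : 0 < β := by rw [hβ_def]; linarith
  have haβ : a < β := by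
    have : s < 4 - 2*a := by nlinarith [sq_nonneg (s - (4 - 2*a))]
    rw [hβ_def]; linarith
  have hβ1 : β < 1 := by rw [hβ_def]; nlinarith
  have hr2gt1 : 1 < r2 := by
    have : 2 - 4*a < s := by nlinarith [sq_nonneg (s - (2 - 4*a))]
    rw [hr2_def]; linarith
  -- key quadratic factorization: 3u² - 4(1+a)u + 6a = 3(u-β)(u-r2)
  have hfact : ∀ u : ℝ, 3*u^2 - 4*(1+a)*u + 6*a = 3*(u-β)*(u-r2) := by
    intro u
    rw [hβ_def, hr2_def]
    field_simp
    nlinarith [hs2]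
  -- F in factored form
  have hFf : ∀ u : ℝ, F lam a u = -lam * u^2 / 12 * (3*u^2 - 4*(1+a)*u + 6*a) := by
    intro u; rw [F_eq]; ring
  have hFβ : F lam a β = 0 := by
    rw [hFf, hfact]; ring
  refine ⟨β, ⟨hβ0, hβ1⟩, hFβ, ?_, haβ, ?_, ?_, ?_⟩
  · -- uniqueness
    rintro β' ⟨hb0, hb1⟩ hFb
    rw [hFf] at hFb
    have hq : 3*β'^2 - 4*(1+a)*β' + 6*a = 0 := by
      rcases mul_eq_zero.1 hFb with h | h
      · exfalso
        have : β'^2 > 0 := by positivity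
        have : -lam * β'^2 / 12 < 0 := by
          have := hlam; nlinarith
        linarith [h ▸ this]
      · exact h
    rw [hfact] at hq
    have h2 : β' - r2 ≠ 0 := by
      intro h; have : β' = r2 := by linarith [sub_eq_zero.1 h]
      linarith
    have := mul_eq_zero.1 hq
    rcases this with h | h
    · rcases mul_eq_zero.1 h with h | h
      · norm_num at h
      · linarith [sub_eq_zero.1 h]
    · exact absurd h h2
  · -- F < 0 on (0,β)
    rintro u ⟨hu0, huβ⟩
    rw [hFf, hfact]
    have h1 : 0 < β - u := by linarith
    have h2 : 0 < r2 - u := by linarith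
    have hp : 0 < 3*(β-u)*(r2-u) := by positivity
    have hu2 : 0 < u^2 := by positivity
    nlinarith [mul_pos (mul_pos hlam hu2) hp]
  · -- F > 0 on (β,1]
    rintro u ⟨huβ, hu1⟩
    rw [hFf, hfact]
    have h1 : 0 < u - β := by linarith
    have h2 : 0 < r2 - u := by linarith
    have hu0 : 0 < u := by linarith
    have hp : 0 < 3*(u-β)*(r2-u) := by positivity
    have hu2 : 0 < u^2 := by positivity
    nlinarith [mul_pos (mul_pos hlam hu2) hp]
  · -- intersection criterion
    set H : ℝ → ℝ := fun u => lam * (u^2/2 - 2*(1+a)*u/3 + a) with hH_def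
    have hkey : ∀ u : ℝ, -2 * F lam a u = u^2 * H u := by
      intro u; rw [hFf, hH_def]; ring
    constructor
    · rintro ⟨u, ⟨hu0, huβ⟩, heq⟩
      rw [hkey] at heq
      have hu2 : (0:ℝ) < u^2 := by positivity
      have h' : u^2 * α = u^2 * H u := by linear_combination heq
      have hαH : α = H u := mul_left_cancel₀ (ne_of_gt hu2) h'
      rw [hαH]
      show lam * (u^2/2 - 2*(1+a)*u/3 + a) < a * lam
      have hu1 : u < 1 := by linarith
      have hfac : 0 < 2*(1+a)/3 - u/2 := by linarith
      nlinarith [mul_pos (mul_pos hlam hu0) hfac]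
    · intro hαa
      have hcont : ContinuousOn H (Set.Icc 0 β) := by
        rw [hH_def]; fun_prop
      have hHβ : H β = 0 := by
        have := hfact β
        rw [hH_def]
        have hqβ : 3*β^2 - 4*(1+a)*β + 6*a = 0 := by rw [this]; ring
        nlinarith [hqβ]
      have hH0 : H 0 = a * lam := by rw [hH_def]; ring
      have : α ∈ Set.Ioo (H β) (H 0) := by
        rw [hHβ, hH0]; exact ⟨hα, hαa⟩
      have := intermediate_value_Ioo' hβ0.le hcont this
      obtain ⟨u, hu, hHu⟩ := this
      exact ⟨u, hu, by rw [hkey, hHu]; ring⟩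
end
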